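/- arXiv:2504.09162 — 6 statements merged into one kernel-verified Lean document; each statement's English description precedes it below -/
import Mathlib

section
/- Let n ≥ 1, let γ : ℝ → ℝⁿ be smooth, let I ⊆ [-2,2] be a compact interval, and let c > 0. Then there exists a constant C > 0 (depending only on n, c and γ) such that the following holds: if ξ ∈ ℝⁿ and 1 ≤ ℓ ≤ n are such that |γ^{(ℓ)}(t) · ξ| > c|ξ| for all t ∈ I, then |∫_I e^{2πi γ(t)·ξ} dt| ≤ C (1 + H_γ(ξ))^{-1}, where H_γ is the H-functional associated to γ on I. -/
open MeasureTheory Real Set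
open scoped ContDiff


/-- The `H`-functional `H_γ(ξ) = inf_{t ∈ I} max_{1 ≤ r ≤ n} |γ^{(r)}(t)·ξ|^{1/r}`. -/
noncomputable def Hfun (n : ℕ) (γ : ℝ → EuclideanSpace ℝ (Fin n)) (I : Set ℝ)
    (ξ : EuclideanSpace ℝ (Fin n)) : ℝ :=
  sInf ((fun t => ⨆ r : Fin n,
    |∑ i, iteratedDeriv (r.1 + 1) γ t i * ξ i| ^ (((r.1 : ℝ) + 1)⁻¹)) '' I)

namespace ACKproof

noncomputable def E (f : ℝ → ℝ) (t : ℝ) : ℂ := Complex.exp (Complex.I * f t)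

lemma contE {f : ℝ → ℝ} (hf : Continuous f) : Continuous (E f) :=
  Complex.continuous_exp.comp (continuous_const.mul (Complex.continuous_ofReal.comp hf))

lemma normE (f : ℝ → ℝ) (t : ℝ) : ‖E f t‖ = 1 := by
  simp [E, Complex.norm_exp]

lemma intE {f : ℝ → ℝ} (hf : Continuous f) (a b : ℝ) : IntervalIntegrable (E f) volume a b :=
  (contE hf).intervalIntegrable a b

lemma trivE {f : ℝ → ℝ} {a b : ℝ} (hab : a ≤ b) :
    ‖∫ t in a..b, E f t‖ ≤ b - a := by
  have h := intervalIntegral.norm_integral_le_of_norm_le_const (C := 1) (f := E f)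
    (a := a) (b := b) (fun x _ => (normE f x).le)
  simpa [abs_of_nonneg (sub_nonneg.2 hab)] using h

lemma smooth_deriv {f : ℝ → ℝ} (hf : ContDiff ℝ ∞ f) : ContDiff ℝ ∞ (deriv f) :=
  (contDiff_infty_iff_deriv.mp hf).2

lemma ibp_core {f : ℝ → ℝ} (hf : ContDiff ℝ ∞ f) {a b mu : ℝ} (hab : a ≤ b) (hmu : 0 < mu)
    (h1 : ∀ t ∈ Icc a b, mu ≤ |deriv f t|) :
    ‖∫ t in a..b, E f t‖ ≤ 2 / mu + ∫ t in a..b, |deriv (deriv f) t| / (deriv f t) ^ 2 := by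
  have hdf : Differentiable ℝ f := hf.differentiable (by norm_num)
  have hf' : ContDiff ℝ ∞ (deriv f) := smooth_deriv hf
  have hdf' : Differentiable ℝ (deriv f) := hf'.differentiable (by norm_num)
  have hc' : Continuous (deriv f) := hdf'.continuous
  have hc'' : Continuous (deriv (deriv f)) := ((smooth_deriv hf').differentiable (by norm_num)).continuous
  have hne : ∀ t ∈ Icc a b, deriv f t ≠ 0 := by
    intro t ht h0
    have := h1 t ht; rw [h0] at this; simp at this; linarith
  set D : ℝ → ℂ := fun t => E f t *
      (Complex.I * Complex.ofReal (deriv (deriv f) t) / (Complex.ofReal (deriv f t)) ^ 2)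
    with hD
  set h : ℝ → ℂ := fun t => E f t * (Complex.I * Complex.ofReal (deriv f t))⁻¹ with hh
  have hFne : ∀ t ∈ Icc a b, (Complex.I * Complex.ofReal (deriv f t)) ≠ 0 := by
    intro t ht
    exact mul_ne_zero Complex.I_ne_zero (Complex.ofReal_ne_zero.mpr (hne t ht))
  have key : ∀ t ∈ Ioo a b, HasDerivAt h (E f t + D t) t := by
    intro t ht
    have htI : t ∈ Icc a b := Ioo_subset_Icc_self ht
    have h0 : deriv f t ≠ 0 := hne t htI
    have h0' : (Complex.I * Complex.ofReal (deriv f t)) ≠ 0 := hFne t htI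
    have d1 : HasDerivAt (fun s : ℝ => (Complex.ofReal (f s))) (Complex.ofReal (deriv f t)) t :=
      (hdf t).hasDerivAt.ofReal_comp
    have d2 : HasDerivAt (fun s : ℝ => Complex.I * Complex.ofReal (f s))
        (Complex.I * Complex.ofReal (deriv f t)) t := d1.const_mul _
    have dE : HasDerivAt (E f) (Complex.I * Complex.ofReal (deriv f t) * E f t) t := by
      have := d2.cexp
      rw [show E f = fun x => Complex.exp (Complex.I * ↑(f x)) from rfl]
      simpa [mul_comm] using this
    have d3 : HasDerivAt (fun s : ℝ => Complex.ofReal (deriv f s))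
        (Complex.ofReal (deriv (deriv f) t)) t := (hdf' t).hasDerivAt.ofReal_comp
    have d4 : HasDerivAt (fun s : ℝ => Complex.I * Complex.ofReal (deriv f s))
        (Complex.I * Complex.ofReal (deriv (deriv f) t)) t := d3.const_mul _
    have d5 : HasDerivAt (fun s : ℝ => (Complex.I * Complex.ofReal (deriv f s))⁻¹)
        (-(Complex.I * Complex.ofReal (deriv (deriv f) t)) /
          (Complex.I * Complex.ofReal (deriv f t)) ^ 2) t := by
      have := (hasDerivAt_inv h0').comp t d4
      exact this.congr_deriv (by ring)
    have dh := dE.mul d5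
    have heq : Complex.I * Complex.ofReal (deriv f t) * E f t *
          (Complex.I * Complex.ofReal (deriv f t))⁻¹ +
        E f t * (-(Complex.I * Complex.ofReal (deriv (deriv f) t)) /
          (Complex.I * Complex.ofReal (deriv f t)) ^ 2)
        = E f t + D t := by
      rw [hD]
      have hz : (Complex.ofReal (deriv f t)) ≠ 0 := Complex.ofReal_ne_zero.mpr h0
      field_simp
      linear_combination (-(E f t *
        Complex.ofReal (deriv (deriv f) t))) * Complex.I_sq
    have hgoal : HasDerivAt h (Complex.I * Complex.ofReal (deriv f t) * E f t *
          (Complex.I * Complex.ofReal (deriv f t))⁻¹ +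
        E f t * (-(Complex.I * Complex.ofReal (deriv (deriv f) t)) /
          (Complex.I * Complex.ofReal (deriv f t)) ^ 2)) t := dh
    rwa [heq] at hgoal
  have hcontOn : ContinuousOn h (Icc a b) := by
    apply ((contE hf.continuous).continuousOn).mul
    exact ContinuousOn.inv₀
      ((continuous_const.mul (Complex.continuous_ofReal.comp hc')).continuousOn) hFne
  have hDcont : ContinuousOn D (Icc a b) := by
    apply ((contE hf.continuous).continuousOn).mul
    apply ContinuousOn.div
    · exact (continuous_const.mul (Complex.continuous_ofReal.comp hc'')).continuousOn
    · exact ((Complex.continuous_ofReal.comp hc').pow 2).continuousOn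
    · intro t ht
      exact pow_ne_zero 2 (Complex.ofReal_ne_zero.mpr (hne t ht))
  have hDint : IntervalIntegrable D volume a b := by
    apply ContinuousOn.intervalIntegrable
    rwa [uIcc_of_le hab]
  have hsum : IntervalIntegrable (fun t => E f t + D t) volume a b :=
    (intE hf.continuous a b).add hDint
  have ftc : ∫ t in a..b, (E f t + D t) = h b - h a :=
    intervalIntegral.integral_eq_sub_of_hasDerivAt_of_le hab hcontOn key hsum
  have hsplit : ∫ t in a..b, (E f t + D t) = (∫ t in a..b, E f t) + ∫ t in a..b, D t :=
    intervalIntegral.integral_add (intE hf.continuous a b) hDint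
  have hEeq : ∫ t in a..b, E f t = h b - h a - ∫ t in a..b, D t := by
    rw [← ftc, hsplit]; ring
  have hnorm_h : ∀ t ∈ Icc a b, ‖h t‖ ≤ 1 / mu := by
    intro t ht
    rw [hh]
    simp only [norm_mul, normE, one_mul, norm_inv, Complex.norm_I, Complex.norm_real,
      Real.norm_eq_abs]
    rw [one_div]
    exact inv_anti₀ hmu (h1 t ht)
  have hDnorm : ∀ t, ‖D t‖ = |deriv (deriv f) t| / (deriv f t) ^ 2 := by
    intro t
    rw [hD]
    simp only [norm_mul, normE, one_mul, norm_div, norm_pow, Complex.norm_I,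
      Complex.norm_real, Real.norm_eq_abs, sq_abs]
  have hDbound : ‖∫ t in a..b, D t‖ ≤ ∫ t in a..b, |deriv (deriv f) t| / (deriv f t) ^ 2 := by
    have := intervalIntegral.norm_integral_le_integral_norm (f := D) (a := a) (b := b)
      (μ := volume) hab
    simpa [hDnorm] using this
  calc ‖∫ t in a..b, E f t‖ = ‖h b - h a - ∫ t in a..b, D t‖ := by rw [hEeq]
    _ ≤ ‖h b - h a‖ + ‖∫ t in a..b, D t‖ := norm_sub_le _ _
    _ ≤ (‖h b‖ + ‖h a‖) + ‖∫ t in a..b, D t‖ := by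
        gcongr; exact norm_sub_le _ _
    _ ≤ (1 / mu + 1 / mu) + ∫ t in a..b, |deriv (deriv f) t| / (deriv f t) ^ 2 := by
        gcongr
        · exact hnorm_h b (right_mem_Icc.mpr hab)
        · exact hnorm_h a (left_mem_Icc.mpr hab)
    _ = 2 / mu + ∫ t in a..b, |deriv (deriv f) t| / (deriv f t) ^ 2 := by
        rw [← add_div]; norm_num


lemma vdc1 {f : ℝ → ℝ} (hf : ContDiff ℝ ∞ f) {a b mu : ℝ} (hab : a ≤ b) (hmu : 0 < mu)
    (h1 : ∀ t ∈ Icc a b, mu ≤ |deriv f t|)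
    (h2 : (∀ t ∈ Icc a b, 0 ≤ deriv (deriv f) t) ∨ (∀ t ∈ Icc a b, deriv (deriv f) t ≤ 0)) :
    ‖∫ t in a..b, E f t‖ ≤ 4 / mu := by
  have core := ibp_core hf hab hmu h1
  have hf' : ContDiff ℝ ∞ (deriv f) := smooth_deriv hf
  have hdf' : Differentiable ℝ (deriv f) := hf'.differentiable (by norm_num)
  have hc' : Continuous (deriv f) := hdf'.continuous
  have hc'' : Continuous (deriv (deriv f)) :=
    ((smooth_deriv hf').differentiable (by norm_num)).continuous
  have hne : ∀ t ∈ Icc a b, deriv f t ≠ 0 := by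
    intro t ht h0
    have := h1 t ht; rw [h0] at this; simp at this; linarith
  -- FTC for 1/(deriv f)
  have hG : ∀ t ∈ Ioo a b, HasDerivAt (fun s => (deriv f s)⁻¹)
      (-(deriv (deriv f) t) / (deriv f t) ^ 2) t := by
    intro t ht
    exact ((hdf' t).hasDerivAt).inv (hne t (Ioo_subset_Icc_self ht))
  have hGcont : ContinuousOn (fun s => (deriv f s)⁻¹) (Icc a b) :=
    ContinuousOn.inv₀ hc'.continuousOn hne
  have hIcont : ContinuousOn (fun t => -(deriv (deriv f) t) / (deriv f t) ^ 2) (Icc a b) := by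
    apply ContinuousOn.div (hc''.neg.continuousOn) ((hc'.pow 2).continuousOn)
    intro t ht; exact pow_ne_zero 2 (hne t ht)
  have hIint : IntervalIntegrable (fun t => -(deriv (deriv f) t) / (deriv f t) ^ 2) volume a b := by
    apply ContinuousOn.intervalIntegrable; rwa [uIcc_of_le hab]
  have ftc2 : ∫ t in a..b, (-(deriv (deriv f) t) / (deriv f t) ^ 2)
      = (deriv f b)⁻¹ - (deriv f a)⁻¹ :=
    intervalIntegral.integral_eq_sub_of_hasDerivAt_of_le hab hGcont hG hIint
  have habs : ∀ t ∈ Icc a b, (deriv f t)⁻¹ ∈ Icc (-(1/mu)) (1/mu) := by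
    intro t ht
    have h1t := h1 t ht
    have : |(deriv f t)⁻¹| ≤ 1 / mu := by
      rw [abs_inv, one_div]
      exact inv_anti₀ hmu h1t
    exact ⟨neg_le_of_abs_le this, le_of_abs_le this⟩
  have hval : ∫ t in a..b, |deriv (deriv f) t| / (deriv f t) ^ 2 ≤ 2 / mu := by
    rcases h2 with hpos | hneg
    · have hcongr : ∫ t in a..b, |deriv (deriv f) t| / (deriv f t) ^ 2
          = ∫ t in a..b, -(-(deriv (deriv f) t) / (deriv f t) ^ 2) := by
        apply intervalIntegral.integral_congr
        intro t ht
        rw [uIcc_of_le hab] at ht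
        simp only [abs_of_nonneg (hpos t ht), neg_div, neg_neg]
      rw [hcongr, intervalIntegral.integral_neg, ftc2]
      have ha := habs a (left_mem_Icc.mpr hab)
      have hb := habs b (right_mem_Icc.mpr hab)
      rw [mem_Icc] at ha hb
      have : 2 / mu = 1 / mu + 1 / mu := by rw [← add_div]; norm_num
      rw [this]; linarith
    · have hcongr : ∫ t in a..b, |deriv (deriv f) t| / (deriv f t) ^ 2
          = ∫ t in a..b, (-(deriv (deriv f) t) / (deriv f t) ^ 2) := by
        apply intervalIntegral.integral_congr
        intro t ht
        rw [uIcc_of_le hab] at ht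
        simp only [abs_of_nonpos (hneg t ht), neg_div]
      rw [hcongr, ftc2]
      have ha := habs a (left_mem_Icc.mpr hab)
      have hb := habs b (right_mem_Icc.mpr hab)
      rw [mem_Icc] at ha hb
      have : 2 / mu = 1 / mu + 1 / mu := by rw [← add_div]; norm_num
      rw [this]; linarith
  have : (4:ℝ) / mu = 2 / mu + 2 / mu := by rw [← add_div]; norm_num
  rw [this]
  calc ‖∫ t in a..b, E f t‖
      ≤ 2 / mu + ∫ t in a..b, |deriv (deriv f) t| / (deriv f t) ^ 2 := core
    _ ≤ 2 / mu + 2 / mu := by linarith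


lemma smooth_iter {f : ℝ → ℝ} (hf : ContDiff ℝ ∞ f) (n : ℕ) : ContDiff ℝ ∞ (iteratedDeriv n f) := by
  rw [iteratedDeriv_eq_iterate]
  exact ContDiff.iterate_deriv n hf

lemma diff_iter {f : ℝ → ℝ} (hf : ContDiff ℝ ∞ f) (n : ℕ) :
    Differentiable ℝ (iteratedDeriv n f) :=
  (smooth_iter hf n).differentiable (by norm_num)

lemma cont_iter {f : ℝ → ℝ} (hf : ContDiff ℝ ∞ f) (n : ℕ) :
    Continuous (iteratedDeriv n f) := (diff_iter hf n).continuous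

lemma iter_cmul {f : ℝ → ℝ} (hf : ContDiff ℝ ∞ f) (C : ℝ) (n : ℕ) :
    iteratedDeriv n (fun s => C * f s) = fun t => C * iteratedDeriv n f t := by
  induction n with
  | zero => simp [iteratedDeriv_zero]
  | succ n ih =>
    funext t
    rw [iteratedDeriv_succ, iteratedDeriv_succ, ih]
    exact deriv_const_mul C ((diff_iter hf n) t)

lemma sc_of_ne {g : ℝ → ℝ} {s : Set ℝ} (hs : s.OrdConnected) (hc : ContinuousOn g s)
    (hne : ∀ t ∈ s, g t ≠ 0) : (∀ t ∈ s, 0 < g t) ∨ (∀ t ∈ s, g t < 0) := by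
  by_contra hcon
  push_neg at hcon
  obtain ⟨⟨t₁, ht₁, h₁⟩, ⟨t₂, ht₂, h₂⟩⟩ := hcon
  have h₁' : g t₁ < 0 := lt_of_le_of_ne h₁ (hne t₁ ht₁)
  have h₂' : 0 < g t₂ := lt_of_le_of_ne h₂ (Ne.symm (hne t₂ ht₂))
  have hsub : uIcc t₁ t₂ ⊆ s := hs.uIcc_subset ht₁ ht₂
  have h0 : (0:ℝ) ∈ uIcc (g t₁) (g t₂) := by
    rw [Set.mem_uIcc]; left; exact ⟨h₁'.le, h₂'.le⟩
  obtain ⟨z, hz, hz0⟩ := intermediate_value_uIcc (hc.mono hsub) h0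
  exact hne z (hsub hz) hz0

lemma vdc_step (k : ℕ) (hk : 1 ≤ k)
    (IH : ∀ f : ℝ → ℝ, ContDiff ℝ ∞ f → ∀ a b lam : ℝ, a ≤ b → 0 < lam →
      (∀ t ∈ Icc a b, lam ^ k ≤ |iteratedDeriv k f t|) →
      (k = 1 → (∀ t ∈ Icc a b, 0 ≤ iteratedDeriv 2 f t) ∨
        (∀ t ∈ Icc a b, iteratedDeriv 2 f t ≤ 0)) →
      ‖∫ t in a..b, E f t‖ ≤ (6 * 2 ^ k - 2) / lam)
    (f : ℝ → ℝ) (hf : ContDiff ℝ ∞ f) (a b lam : ℝ) (hab : a ≤ b) (hlam : 0 < lam)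
    (hlow : ∀ t ∈ Icc a b, lam ^ (k+1) ≤ iteratedDeriv (k+1) f t) :
    ‖∫ t in a..b, E f t‖ ≤ (6 * 2 ^ (k+1) - 2) / lam := by
  set g := iteratedDeriv k f with hg
  have hgc : Continuous g := cont_iter hf k
  have hgd : Differentiable ℝ g := diff_iter hf k
  have hBk : (0:ℝ) ≤ (6 * 2 ^ k - 2) / lam := by
    apply div_nonneg _ hlam.le
    have : (1:ℝ) ≤ 2 ^ k := one_le_pow₀ (by norm_num)
    nlinarith
  -- mean value type bound
  have hmono : MonotoneOn (fun t => g t - lam ^ (k+1) * t) (Icc a b) := by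
    apply monotoneOn_of_deriv_nonneg (convex_Icc a b)
    · exact (hgc.sub (continuous_const.mul continuous_id)).continuousOn
    · intro x _
      exact ((hgd x).sub ((differentiable_id.const_mul _) x)).differentiableWithinAt
    · intro x hx
      rw [interior_Icc] at hx
      have hdx : HasDerivAt (fun t => g t - lam ^ (k+1) * t)
          (iteratedDeriv (k+1) f x - lam ^ (k+1)) x := by
        have h1 : HasDerivAt g (iteratedDeriv (k+1) f x) x := by
          have := (hgd x).hasDerivAt
          rwa [show deriv g x = iteratedDeriv (k+1) f x by
            rw [hg, ← iteratedDeriv_succ]] at this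
        have h2 : HasDerivAt (fun t : ℝ => lam ^ (k+1) * t) (lam ^ (k+1)) x := by
          simpa using (hasDerivAt_id x).const_mul (lam ^ (k+1))
        exact h1.sub h2
      rw [hdx.deriv]
      have := hlow x (Ioo_subset_Icc_self hx)
      linarith
  have haux : ∀ s ∈ Icc a b, ∀ t ∈ Icc a b, s ≤ t → lam ^ (k+1) * (t - s) ≤ g t - g s := by
    intro s hs t ht hst
    have := hmono hs ht hst
    simp only at this
    nlinarith
  have gmono : MonotoneOn g (Icc a b) := by
    intro s hs t ht hst
    have := haux s hs t ht hst
    have hpos : 0 ≤ lam ^ (k+1) * (t - s) :=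
      mul_nonneg (pow_pos hlam _).le (by linarith)
    linarith
  set c₀ : ℝ := lam ^ k with hc₀
  have hc₀pos : 0 < c₀ := pow_pos hlam k
  -- left side point u
  have uside : ∃ u, a ≤ u ∧ u ≤ b ∧ (u = a ∨ g u ≤ -c₀) ∧
      (∀ s ∈ Icc a b, u < s → -c₀ < g s) ∧
      ‖∫ t in a..u, E f t‖ ≤ (6 * 2 ^ k - 2) / lam := by
    set A : Set ℝ := Icc a b ∩ {t | g t ≤ -c₀} with hA
    have hAclosed : IsClosed A := isClosed_Icc.inter (isClosed_le hgc continuous_const)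
    have hAcomp : IsCompact A := isCompact_Icc.of_isClosed_subset hAclosed inter_subset_left
    by_cases hAne : A.Nonempty
    · have huA : sSup A ∈ A := hAcomp.sSup_mem hAne
      set u := sSup A with hu
      have huI : u ∈ Icc a b := huA.1
      refine ⟨u, huI.1, huI.2, Or.inr huA.2, ?_, ?_⟩
      · intro s hs hus
        by_contra hcon
        push_neg at hcon
        have : s ∈ A := ⟨hs, hcon⟩
        have : s ≤ u := le_csSup hAcomp.bddAbove this
        linarith
      · apply IH f hf a u lam huI.1 hlam
        · intro t ht
          have htb : t ∈ Icc a b := ⟨ht.1, ht.2.trans huI.2⟩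
          have : g t ≤ g u := gmono htb huI ht.2
          have : g t ≤ -c₀ := this.trans huA.2
          rw [← hg]
          calc lam ^ k = c₀ := rfl
            _ ≤ -g t := by linarith
            _ ≤ |g t| := neg_le_abs _
        · intro hk1
          left
          intro t ht
          have htb : t ∈ Icc a b := ⟨ht.1, ht.2.trans huI.2⟩
          have := hlow t htb
          have hpow : 0 < lam ^ (k+1) := pow_pos hlam _
          have : 0 ≤ iteratedDeriv (k+1) f t := by linarith
          rwa [hk1] at this
    · refine ⟨a, le_refl a, hab, Or.inl rfl, ?_, ?_⟩
      · intro s hs _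
        by_contra hcon
        push_neg at hcon
        exact hAne ⟨s, hs, hcon⟩
      · rw [intervalIntegral.integral_same]
        simpa using hBk
  -- right side point v
  have vside : ∃ v, a ≤ v ∧ v ≤ b ∧ (v = b ∨ c₀ ≤ g v) ∧
      (∀ s ∈ Icc a b, s < v → g s < c₀) ∧
      ‖∫ t in v..b, E f t‖ ≤ (6 * 2 ^ k - 2) / lam := by
    set B : Set ℝ := Icc a b ∩ {t | c₀ ≤ g t} with hB
    have hBclosed : IsClosed B := isClosed_Icc.inter (isClosed_le continuous_const hgc)
    have hBcomp : IsCompact B := isCompact_Icc.of_isClosed_subset hBclosed inter_subset_left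
    by_cases hBne : B.Nonempty
    · have hvB : sInf B ∈ B := hBcomp.sInf_mem hBne
      set v := sInf B with hv
      have hvI : v ∈ Icc a b := hvB.1
      refine ⟨v, hvI.1, hvI.2, Or.inr hvB.2, ?_, ?_⟩
      · intro s hs hsv
        by_contra hcon
        push_neg at hcon
        have : s ∈ B := ⟨hs, hcon⟩
        have : v ≤ s := csInf_le hBcomp.bddBelow this
        linarith
      · apply IH f hf v b lam hvI.2 hlam
        · intro t ht
          have htb : t ∈ Icc a b := ⟨hvI.1.trans ht.1, ht.2⟩
          have : g v ≤ g t := gmono hvI htb ht.1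
          have hO : c₀ ≤ g t := hvB.2.trans this
          rw [← hg]
          calc lam ^ k = c₀ := rfl
            _ ≤ g t := hO
            _ ≤ |g t| := le_abs_self _
        · intro hk1
          left
          intro t ht
          have htb : t ∈ Icc a b := ⟨hvI.1.trans ht.1, ht.2⟩
          have := hlow t htb
          have hpow : 0 < lam ^ (k+1) := pow_pos hlam _
          have : 0 ≤ iteratedDeriv (k+1) f t := by linarith
          rwa [hk1] at this
    · refine ⟨b, hab, le_refl b, Or.inl rfl, ?_, ?_⟩
      · intro s hs _
        by_contra hcon
        push_neg at hcon
        exact hBne ⟨s, hs, hcon⟩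
      · rw [intervalIntegral.integral_same]
        simpa using hBk
  obtain ⟨u, hau, hub, hgu, huno, hubound⟩ := uside
  obtain ⟨v, hav, hvb, hgv, hvno, hvbound⟩ := vside
  have huv : u ≤ v := by
    rcases hgu with rfl | hgu
    · exact hav
    · rcases hgv with rfl | hgv
      · exact hub
      · by_contra hcon
        push_neg at hcon
        have := gmono ⟨hav, hvb⟩ ⟨hau, hub⟩ hcon.le
        linarith
  -- middle bound
  have key : ∀ s t : ℝ, u < s → s ≤ t → t < v → t - s ≤ 2 / lam := by
    intro s t hus hst htv
    have hsI : s ∈ Icc a b := ⟨hau.trans hus.le, hst.trans (htv.le.trans hvb)⟩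
    have htI : t ∈ Icc a b := ⟨hsI.1.trans hst, htv.le.trans hvb⟩
    have h1 : -c₀ < g s := huno s hsI hus
    have h2 : g t < c₀ := hvno t htI htv
    have h3 := haux s hsI t htI hst
    have h4 : lam ^ (k+1) * (t - s) < 2 * c₀ := by linarith
    rw [hc₀] at h4
    have h5 : lam ^ (k+1) = lam ^ k * lam := pow_succ lam k
    rw [h5] at h4
    have h6 : (t - s) * lam < 2 := by
      have hpk : 0 < lam ^ k := pow_pos hlam k
      nlinarith
    rw [div_eq_mul_inv]
    calc t - s = ((t - s) * lam) * lam⁻¹ := by field_simp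
      _ ≤ 2 * lam⁻¹ := by
          apply mul_le_mul_of_nonneg_right h6.le (inv_nonneg.mpr hlam.le)
  have hmid : v - u ≤ 2 / lam := by
    by_contra hcon
    push_neg at hcon
    set ε := (v - u - 2 / lam) / 4 with hε
    have hεpos : 0 < ε := by
      rw [hε]; linarith
    have h2l : 0 < 2 / lam := by positivity
    have := key (u + ε) (v - ε) (by linarith) (by rw [hε]; linarith) (by linarith)
    rw [hε] at this
    linarith [this]
  -- put the pieces together
  have i1 : IntervalIntegrable (E f) volume a u := intE hf.continuous a u
  have i2 : IntervalIntegrable (E f) volume u v := intE hf.continuous u v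
  have i3 : IntervalIntegrable (E f) volume v b := intE hf.continuous v b
  have s2 : (∫ t in u..v, E f t) + ∫ t in v..b, E f t = ∫ t in u..b, E f t :=
    intervalIntegral.integral_add_adjacent_intervals i2 i3
  have s1 : (∫ t in a..u, E f t) + ∫ t in u..b, E f t = ∫ t in a..b, E f t :=
    intervalIntegral.integral_add_adjacent_intervals i1 (intE hf.continuous u b)
  have hmidbound : ‖∫ t in u..v, E f t‖ ≤ 2 / lam :=
    (trivE huv).trans hmid
  calc ‖∫ t in a..b, E f t‖
      = ‖(∫ t in a..u, E f t) + ((∫ t in u..v, E f t) + ∫ t in v..b, E f t)‖ := by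
        rw [s2, s1]
    _ ≤ ‖∫ t in a..u, E f t‖ + ‖(∫ t in u..v, E f t) + ∫ t in v..b, E f t‖ := norm_add_le _ _
    _ ≤ ‖∫ t in a..u, E f t‖ + (‖∫ t in u..v, E f t‖ + ‖∫ t in v..b, E f t‖) := by
        gcongr; exact norm_add_le _ _
    _ ≤ (6 * 2 ^ k - 2) / lam + (2 / lam + (6 * 2 ^ k - 2) / lam) := by gcongr
    _ = (6 * 2 ^ k - 2 + (2 + (6 * 2 ^ k - 2))) / lam := by
        rw [← add_div, ← add_div]
    _ = (6 * 2 ^ (k+1) - 2) / lam := by ring_nf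


lemma intervalIntegral_conj {h : ℝ → ℂ} {a b : ℝ} :
    ∫ t in a..b, (starRingEnd ℂ) (h t) = (starRingEnd ℂ) (∫ t in a..b, h t) := by
  rw [show (∫ t in a..b, (starRingEnd ℂ) (h t))
      = (∫ t in Ioc a b, (starRingEnd ℂ) (h t)) - ∫ t in Ioc b a, (starRingEnd ℂ) (h t) from rfl,
    show (∫ t in a..b, h t) = (∫ t in Ioc a b, h t) - ∫ t in Ioc b a, h t from rfl,
    integral_conj, integral_conj, map_sub]

lemma E_neg (f : ℝ → ℝ) (t : ℝ) : E (fun s => -f s) t = (starRingEnd ℂ) (E f t) := by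
  rw [E, E, ← Complex.exp_conj]
  congr 1
  simp [Complex.conj_ofReal]

lemma norm_int_E_neg (f : ℝ → ℝ) (a b : ℝ) :
    ‖∫ t in a..b, E (fun s => -f s) t‖ = ‖∫ t in a..b, E f t‖ := by
  have : (fun t => E (fun s => -f s) t) = fun t => (starRingEnd ℂ) (E f t) := by
    funext t; exact E_neg f t
  rw [this, intervalIntegral_conj, RCLike.norm_conj]

lemma vdc : ∀ k : ℕ, 1 ≤ k → ∀ f : ℝ → ℝ, ContDiff ℝ ∞ f → ∀ a b lam : ℝ, a ≤ b → 0 < lam →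
    (∀ t ∈ Icc a b, lam ^ k ≤ |iteratedDeriv k f t|) →
    (k = 1 → (∀ t ∈ Icc a b, 0 ≤ iteratedDeriv 2 f t) ∨
      (∀ t ∈ Icc a b, iteratedDeriv 2 f t ≤ 0)) →
    ‖∫ t in a..b, E f t‖ ≤ (6 * 2 ^ k - 2) / lam := by
  intro k hk
  induction k, hk using Nat.le_induction with
  | base =>
    intro f hf a b lam hab hlam hlow hsgn
    have h2 : iteratedDeriv 2 f = deriv (deriv f) := by
      rw [iteratedDeriv_succ, iteratedDeriv_one]
    have h1 : ∀ t ∈ Icc a b, lam ≤ |deriv f t| := by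
      intro t ht
      have := hlow t ht
      rwa [pow_one, iteratedDeriv_one] at this
    have hb := vdc1 hf hab hlam h1 (by rw [← h2]; exact hsgn rfl)
    apply hb.trans
    gcongr
    norm_num
  | succ k hk IH =>
    intro f hf a b lam hab hlam hlow _
    have hiterc : Continuous (iteratedDeriv (k+1) f) := cont_iter hf (k+1)
    have hne : ∀ t ∈ Icc a b, iteratedDeriv (k+1) f t ≠ 0 := by
      intro t ht h0
      have := hlow t ht
      rw [h0] at this
      simp only [abs_zero] at this
      have := pow_pos hlam (k+1)
      linarith
    rcases sc_of_ne ordConnected_Icc hiterc.continuousOn hne with hpos | hneg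
    · apply vdc_step k hk IH f hf a b lam hab hlam
      intro t ht
      have h1 := hlow t ht
      rwa [abs_of_pos (hpos t ht)] at h1
    · rw [← norm_int_E_neg f a b]
      apply vdc_step k hk IH (fun s => -f s) hf.neg a b lam hab hlam
      intro t ht
      have h1 := hlow t ht
      have h2 : iteratedDeriv (k+1) (fun s => -f s) t = -(iteratedDeriv (k+1) f t) :=
        iteratedDeriv_neg (k+1) f t
      rw [h2]
      rw [abs_of_neg (hneg t ht)] at h1
      linarith


def SC (g : ℝ → ℝ) (s : Set ℝ) : Prop := (∀ t ∈ s, 0 ≤ g t) ∨ (∀ t ∈ s, g t ≤ 0)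

lemma SC.mono {g : ℝ → ℝ} {s s' : Set ℝ} (h : SC g s) (hsub : s' ⊆ s) : SC g s' := by
  rcases h with h | h
  · exact Or.inl fun t ht => h t (hsub ht)
  · exact Or.inr fun t ht => h t (hsub ht)

lemma SC.cmul {g : ℝ → ℝ} {s : Set ℝ} (h : SC g s) (c : ℝ) : SC (fun t => c * g t) s := by
  rcases le_or_gt 0 c with hc | hc
  · rcases h with h | h
    · exact Or.inl fun t ht => mul_nonneg hc (h t ht)
    · exact Or.inr fun t ht => mul_nonpos_of_nonneg_of_nonpos hc (h t ht)
  · rcases h with h | h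
    · exact Or.inr fun t ht => mul_nonpos_of_nonpos_of_nonneg hc.le (h t ht)
    · exact Or.inl fun t ht => by have := h t ht; simp only; nlinarith

lemma SC.reflect {g : ℝ → ℝ} {p q : ℝ} (h : SC g (Icc p q)) (c : ℝ) :
    SC (fun t => c * g (-t)) (Icc (-q) (-p)) := by
  have h' : SC (fun t => g (-t)) (Icc (-q) (-p)) := by
    rcases h with h | h
    · exact Or.inl fun t ht => h (-t) ⟨by linarith [ht.2], by linarith [ht.1]⟩
    · exact Or.inr fun t ht => h (-t) ⟨by linarith [ht.2], by linarith [ht.1]⟩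
  exact h'.cmul c

lemma absMonoAnti {g : ℝ → ℝ} (hgc : Continuous g) (hgd : Differentiable ℝ g) {p q : ℝ}
    (hsc : SC g (Icc p q)) (hsc' : SC (deriv g) (Icc p q)) :
    MonotoneOn (fun t => |g t|) (Icc p q) ∨ AntitoneOn (fun t => |g t|) (Icc p q) := by
  have gMA : MonotoneOn g (Icc p q) ∨ AntitoneOn g (Icc p q) := by
    rcases hsc' with h | h
    · left
      apply monotoneOn_of_deriv_nonneg (convex_Icc p q) hgc.continuousOn
        hgd.differentiableOn
      intro x hx
      rw [interior_Icc] at hx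
      exact h x (Ioo_subset_Icc_self hx)
    · right
      apply antitoneOn_of_deriv_nonpos (convex_Icc p q) hgc.continuousOn
        hgd.differentiableOn
      intro x hx
      rw [interior_Icc] at hx
      exact h x (Ioo_subset_Icc_self hx)
  rcases hsc with h0 | h0 <;> rcases gMA with hm | hm
  · left; intro x hx y hy hxy
    simp only
    rw [abs_of_nonneg (h0 x hx), abs_of_nonneg (h0 y hy)]
    exact hm hx hy hxy
  · right; intro x hx y hy hxy
    simp only
    rw [abs_of_nonneg (h0 x hx), abs_of_nonneg (h0 y hy)]
    exact hm hx hy hxy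
  · right; intro x hx y hy hxy
    simp only
    rw [abs_of_nonpos (h0 x hx), abs_of_nonpos (h0 y hy)]
    exact neg_le_neg (hm hx hy hxy)
  · left; intro x hx y hy hxy
    simp only
    rw [abs_of_nonpos (h0 x hx), abs_of_nonpos (h0 y hy)]
    exact neg_le_neg (hm hx hy hxy)

lemma one_le_two_pi : (1:ℝ) ≤ 2 * π := by nlinarith [pi_gt_three]

/-- van der Corput applied to the scaled phase on a subinterval. -/
lemma vdc_scaled {ψ : ℝ → ℝ} (hψ : ContDiff ℝ ∞ ψ) {ℓ : ℕ} (hl2 : 2 ≤ ℓ) {lam : ℝ}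
    (hlam : 0 < lam) {r : ℕ} (hr : 1 ≤ r) (hrl : r ≤ ℓ) {u v : ℝ} (huv : u ≤ v)
    (hlow : ∀ t ∈ Icc u v, lam ^ r ≤ |iteratedDeriv r ψ t|)
    (hsgn2 : r = 1 → SC (iteratedDeriv 2 ψ) (Icc u v)) :
    ‖∫ t in u..v, E (fun s => 2 * π * ψ s) t‖ ≤ 6 * 2 ^ ℓ / lam := by
  have hf2 : ContDiff ℝ ∞ (fun s => 2 * π * ψ s) := contDiff_const.mul hψ
  have hb := vdc r hr (fun s => 2 * π * ψ s) hf2 u v lam huv hlam ?_ ?_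
  · apply hb.trans
    gcongr
    have h2 : (2:ℝ) ^ r ≤ 2 ^ ℓ := pow_le_pow_right₀ (by norm_num) hrl
    nlinarith
  · intro t ht
    rw [iter_cmul hψ (2 * π) r]
    show lam ^ r ≤ |2 * π * iteratedDeriv r ψ t|
    rw [abs_mul, abs_of_nonneg (show (0:ℝ) ≤ 2 * π by positivity)]
    have h1 := hlow t ht
    nlinarith [one_le_two_pi, abs_nonneg (iteratedDeriv r ψ t), h1]
  · intro hr1
    have h2l : 2 ≤ ℓ := hl2
    have hsc2 := hsgn2 hr1
    rw [iter_cmul hψ (2 * π) 2]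
    rcases hsc2 with h | h
    · exact Or.inl fun t ht => mul_nonneg (by positivity) (h t ht)
    · exact Or.inr fun t ht => mul_nonpos_of_nonneg_of_nonpos (by positivity) (h t ht)

lemma Wstep (ℓ r d : ℕ) (hr : 1 ≤ r) (hrd : r + (d + 1) = ℓ) (lam : ℝ) (hlam : 0 < lam)
    (IH : ∀ ψ : ℝ → ℝ, ContDiff ℝ ∞ ψ → ∀ p q : ℝ, p ≤ q →
      (∀ j, 1 ≤ j → j ≤ ℓ → SC (iteratedDeriv j ψ) (Icc p q)) →
      (∀ t ∈ Icc p q, ∃ j, r + 1 ≤ j ∧ j ≤ ℓ ∧ lam ^ j ≤ |iteratedDeriv j ψ t|) →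
      ‖∫ t in p..q, E (fun s => 2 * π * ψ s) t‖ ≤ ((d:ℝ) + 1) * (6 * 2 ^ ℓ) / lam)
    (ψ : ℝ → ℝ) (hψ : ContDiff ℝ ∞ ψ) (p q : ℝ) (hpq : p ≤ q)
    (hsc : ∀ j, 1 ≤ j → j ≤ ℓ → SC (iteratedDeriv j ψ) (Icc p q))
    (hmax : ∀ t ∈ Icc p q, ∃ j, r ≤ j ∧ j ≤ ℓ ∧ lam ^ j ≤ |iteratedDeriv j ψ t|)
    (hmono : MonotoneOn (fun t => |iteratedDeriv r ψ t|) (Icc p q)) :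
    ‖∫ t in p..q, E (fun s => 2 * π * ψ s) t‖ ≤ ((d:ℝ) + 2) * (6 * 2 ^ ℓ) / lam := by
  have hl2 : 2 ≤ ℓ := by omega
  have hrl : r ≤ ℓ := by omega
  have hBpos : (0:ℝ) ≤ 6 * 2 ^ ℓ / lam := by positivity
  set g := iteratedDeriv r ψ with hg
  have hgc : Continuous g := cont_iter hψ r
  set S : Set ℝ := Icc p q ∩ {t | lam ^ r ≤ |g t|} with hS
  have hSclosed : IsClosed S :=
    isClosed_Icc.inter (isClosed_le continuous_const hgc.abs)
  have hScomp : IsCompact S := isCompact_Icc.of_isClosed_subset hSclosed inter_subset_left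
  by_cases hSne : S.Nonempty
  · have huS : sInf S ∈ S := hScomp.sInf_mem hSne
    set u := sInf S with hu
    have huI : u ∈ Icc p q := huS.1
    -- right piece
    have hright : ‖∫ t in u..q, E (fun s => 2 * π * ψ s) t‖ ≤ 6 * 2 ^ ℓ / lam := by
      apply vdc_scaled hψ hl2 hlam hr hrl huI.2
      · intro t ht
        have htI : t ∈ Icc p q := ⟨huI.1.trans ht.1, ht.2⟩
        calc lam ^ r ≤ |g u| := huS.2
          _ ≤ |g t| := hmono huI htI ht.1
      · intro hr1
        have h21 : 1 ≤ 2 := by norm_num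
        have h2ℓ : 2 ≤ ℓ := hl2
        exact (hsc 2 h21 h2ℓ).mono (Icc_subset_Icc huI.1 le_rfl)
    -- left piece
    have hleft : ‖∫ t in p..u, E (fun s => 2 * π * ψ s) t‖ ≤ ((d:ℝ) + 1) * (6 * 2 ^ ℓ) / lam := by
      rcases eq_or_lt_of_le huI.1 with heq | hlt
      · rw [← heq, intervalIntegral.integral_same]
        simp only [norm_zero]
        positivity
      · set C : Set ℝ := ⋃ j ∈ Finset.Icc (r+1) ℓ, {t | lam ^ j ≤ |iteratedDeriv j ψ t|}
          with hC
        have hCclosed : IsClosed C := by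
          apply isClosed_biUnion_finset
          intro j _
          exact isClosed_le continuous_const (cont_iter hψ j).abs
        have hmemC : ∀ t, t ∈ C ↔ ∃ j, r + 1 ≤ j ∧ j ≤ ℓ ∧ lam ^ j ≤ |iteratedDeriv j ψ t| := by
          intro t
          simp only [hC, Set.mem_iUnion, Finset.mem_Icc, Set.mem_setOf_eq]
          constructor
          · rintro ⟨j, ⟨hj1, hj2⟩, hj3⟩; exact ⟨j, hj1, hj2, hj3⟩
          · rintro ⟨j, hj1, hj2, hj3⟩; exact ⟨j, ⟨hj1, hj2⟩, hj3⟩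
        have hIco : Ico p u ⊆ C := by
          intro t ht
          have htI : t ∈ Icc p q := ⟨ht.1, ht.2.le.trans huI.2⟩
          have htS : t ∉ S := by
            intro htS
            have : u ≤ t := csInf_le hScomp.bddBelow htS
            exact absurd this (not_le.mpr ht.2)
          have htg : ¬ lam ^ r ≤ |g t| := fun hcon => htS ⟨htI, hcon⟩
          obtain ⟨j, hj1, hj2, hj3⟩ := hmax t htI
          rw [hmemC]
          refine ⟨j, ?_, hj2, hj3⟩
          rcases eq_or_lt_of_le hj1 with hje | hjl
          · exfalso; apply htg; rw [hg, hje]; exact hj3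
          · exact hjl
        have hIcc : Icc p u ⊆ C := by
          have h1 : closure (Ico p u) = Icc p u := closure_Ico (ne_of_lt hlt)
          rw [← h1]
          calc closure (Ico p u) ⊆ closure C := closure_mono hIco
            _ = C := hCclosed.closure_eq
        apply IH ψ hψ p u huI.1 (fun j hj1 hj2 => (hsc j hj1 hj2).mono (Icc_subset_Icc le_rfl huI.2))
        intro t ht
        rw [← hmemC]
        exact hIcc ht
    have hsplit : (∫ t in p..u, E (fun s => 2 * π * ψ s) t) +
        ∫ t in u..q, E (fun s => 2 * π * ψ s) t = ∫ t in p..q, E (fun s => 2 * π * ψ s) t :=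
      intervalIntegral.integral_add_adjacent_intervals
        (intE (contDiff_const.mul hψ).continuous p u) (intE (contDiff_const.mul hψ).continuous u q)
    calc ‖∫ t in p..q, E (fun s => 2 * π * ψ s) t‖
        = ‖(∫ t in p..u, E (fun s => 2 * π * ψ s) t) +
            ∫ t in u..q, E (fun s => 2 * π * ψ s) t‖ := by rw [hsplit]
      _ ≤ ‖∫ t in p..u, E (fun s => 2 * π * ψ s) t‖ +
            ‖∫ t in u..q, E (fun s => 2 * π * ψ s) t‖ := norm_add_le _ _
      _ ≤ ((d:ℝ) + 1) * (6 * 2 ^ ℓ) / lam + 6 * 2 ^ ℓ / lam := by gcongr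
      _ = ((d:ℝ) + 2) * (6 * 2 ^ ℓ) / lam := by ring
  · -- S empty : everything is at level ≥ r + 1
    have hup : ∀ t ∈ Icc p q, ∃ j, r + 1 ≤ j ∧ j ≤ ℓ ∧ lam ^ j ≤ |iteratedDeriv j ψ t| := by
      intro t ht
      obtain ⟨j, hj1, hj2, hj3⟩ := hmax t ht
      refine ⟨j, ?_, hj2, hj3⟩
      rcases eq_or_lt_of_le hj1 with hje | hjl
      · exfalso
        refine hSne ⟨t, ht, ?_⟩
        show lam ^ r ≤ |g t|
        rw [hg, hje]; exact hj3
      · exact hjl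
    have := IH ψ hψ p q hpq hsc hup
    apply this.trans
    gcongr ?_ / lam
    nlinarith [pow_pos (show (0:ℝ) < 2 by norm_num) ℓ]

lemma Wlem (ℓ : ℕ) (hl2 : 2 ≤ ℓ) (lam : ℝ) (hlam : 0 < lam) :
    ∀ d : ℕ, ∀ ψ : ℝ → ℝ, ContDiff ℝ ∞ ψ → ∀ r : ℕ, 1 ≤ r → r + d = ℓ → ∀ p q : ℝ, p ≤ q →
    (∀ j, 1 ≤ j → j ≤ ℓ → SC (iteratedDeriv j ψ) (Icc p q)) →
    (∀ t ∈ Icc p q, ∃ j, r ≤ j ∧ j ≤ ℓ ∧ lam ^ j ≤ |iteratedDeriv j ψ t|) →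
    ‖∫ t in p..q, E (fun s => 2 * π * ψ s) t‖ ≤ ((d:ℝ) + 1) * (6 * 2 ^ ℓ) / lam := by
  intro d
  induction d with
  | zero =>
    intro ψ hψ r hr1 hrd p q hpq hsc hmax
    have hrl : r = ℓ := by omega
    subst hrl
    have hbound : ∀ t ∈ Icc p q, lam ^ r ≤ |iteratedDeriv r ψ t| := by
      intro t ht
      obtain ⟨j, hj1, hj2, hj3⟩ := hmax t ht
      have : j = r := le_antisymm hj2 hj1
      rwa [this] at hj3
    have := vdc_scaled hψ hl2 hlam hr1 le_rfl hpq hbound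
      (fun hr1' => by exfalso; omega)
    apply this.trans
    rw [Nat.cast_zero]
    rw [show ((0:ℝ) + 1) * (6 * 2 ^ r) / lam = 6 * 2 ^ r / lam by ring]
  | succ d ih =>
    intro ψ hψ r hr1 hrd p q hpq hsc hmax
    have hrl1 : r ≤ ℓ := by omega
    have hrl2 : r + 1 ≤ ℓ := by omega
    set g := iteratedDeriv r ψ with hg
    have hgc : Continuous g := cont_iter hψ r
    have hgd : Differentiable ℝ g := diff_iter hψ r
    have hdg : deriv g = iteratedDeriv (r+1) ψ := by
      rw [hg, ← iteratedDeriv_succ]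
    have hma := absMonoAnti hgc hgd (hsc r hr1 hrl1) (by rw [hdg]; exact hsc (r+1) (by omega) hrl2)
    have hIH : ∀ ψ' : ℝ → ℝ, ContDiff ℝ ∞ ψ' → ∀ p' q' : ℝ, p' ≤ q' →
        (∀ j, 1 ≤ j → j ≤ ℓ → SC (iteratedDeriv j ψ') (Icc p' q')) →
        (∀ t ∈ Icc p' q', ∃ j, r + 1 ≤ j ∧ j ≤ ℓ ∧ lam ^ j ≤ |iteratedDeriv j ψ' t|) →
        ‖∫ t in p'..q', E (fun s => 2 * π * ψ' s) t‖ ≤ ((d:ℝ) + 1) * (6 * 2 ^ ℓ) / lam := by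
      intro ψ' h' p' q' hpq' hsc' hmax'
      exact ih ψ' h' (r+1) (by omega) (by omega) p' q' hpq' hsc' hmax'
    rcases hma with hmono | hanti
    · have := Wstep ℓ r d hr1 (by omega) lam hlam hIH ψ hψ p q hpq hsc hmax hmono
      apply this.trans
      apply le_of_eq
      push_cast
      ring
    · -- reflect
      set ψ' : ℝ → ℝ := fun s => ψ (-s) with hψ'def
      have hψ' : ContDiff ℝ ∞ ψ' := hψ.comp contDiff_neg
      have hiter : ∀ j t, iteratedDeriv j ψ' t = (-1:ℝ)^j * iteratedDeriv j ψ (-t) := by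
        intro j t
        rw [hψ'def]
        have := iteratedDeriv_comp_neg j ψ t
        rwa [smul_eq_mul] at this
      have hiterfun : ∀ j, iteratedDeriv j ψ' = fun t => (-1:ℝ)^j * iteratedDeriv j ψ (-t) :=
        fun j => funext (hiter j)
      have hsc' : ∀ j, 1 ≤ j → j ≤ ℓ → SC (iteratedDeriv j ψ') (Icc (-q) (-p)) := by
        intro j hj1 hj2
        rw [hiterfun j]
        exact (hsc j hj1 hj2).reflect _
      have hmax' : ∀ t ∈ Icc (-q) (-p), ∃ j, r ≤ j ∧ j ≤ ℓ ∧
          lam ^ j ≤ |iteratedDeriv j ψ' t| := by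
        intro t ht
        have htm : -t ∈ Icc p q := ⟨by linarith [ht.2], by linarith [ht.1]⟩
        obtain ⟨j, hj1, hj2, hj3⟩ := hmax (-t) htm
        refine ⟨j, hj1, hj2, ?_⟩
        rw [hiter j, abs_mul, abs_pow, abs_neg, abs_one, one_pow, one_mul]
        exact hj3
      have hmono' : MonotoneOn (fun t => |iteratedDeriv r ψ' t|) (Icc (-q) (-p)) := by
        intro x hx y hy hxy
        simp only [hiter r, abs_mul, abs_pow, abs_neg, abs_one, one_pow, one_mul]
        have hxm : -x ∈ Icc p q := ⟨by linarith [hx.2], by linarith [hx.1]⟩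
        have hym : -y ∈ Icc p q := ⟨by linarith [hy.2], by linarith [hy.1]⟩
        exact hanti hym hxm (by linarith)
      have hb := Wstep ℓ r d hr1 (by omega) lam hlam hIH ψ' hψ' (-q) (-p)
        (by linarith) hsc' hmax' hmono'
      have hconv : ∫ t in (-q)..(-p), E (fun s => 2 * π * ψ' s) t
          = ∫ t in p..q, E (fun s => 2 * π * ψ s) t := by
        have heq : (fun t => E (fun s => 2 * π * ψ' s) t)
            = fun t => E (fun s => 2 * π * ψ s) (-t) := by
          funext t
          rw [hψ'def, E, E]
        rw [heq, intervalIntegral.integral_comp_neg (fun x => E (fun s => 2 * π * ψ s) x)]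
        rw [neg_neg, neg_neg]
      rw [hconv] at hb
      apply hb.trans
      apply le_of_eq
      push_cast
      ring


lemma rolle_count {g : ℝ → ℝ} (hgd : Differentiable ℝ g) {a b : ℝ} {m : ℕ}
    (h : ∀ s : Finset ℝ, ↑s ⊆ {t ∈ Icc a b | deriv g t = 0} → s.card ≤ m) :
    ∀ s : Finset ℝ, ↑s ⊆ {t ∈ Icc a b | g t = 0} → s.card ≤ m + 1 := by
  intro s hs
  by_contra hcon
  push_neg at hcon
  have hk2 : m + 2 ≤ s.card := hcon
  set k := s.card with hk
  have e : Fin k ≃o {x // x ∈ s} := s.orderIsoOfFin rfl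
  have hzero : ∀ i : Fin k, g ((e i : ℝ)) = 0 := fun i => (hs (e i).2).2
  have hmemI : ∀ i : Fin k, ((e i : ℝ)) ∈ Icc a b := fun i => (hs (e i).2).1
  have hlt : ∀ (i j : Fin k), i < j → ((e i : ℝ)) < ((e j : ℝ)) := by
    intro i j hij
    exact Subtype.coe_lt_coe.mpr (e.strictMono hij)
  have hle : ∀ (i j : Fin k), i ≤ j → ((e i : ℝ)) ≤ ((e j : ℝ)) := by
    intro i j hij
    exact Subtype.coe_le_coe.mpr (e.monotone hij)
  have hchoice : ∀ i : ℕ, ∀ hi : i + 1 < k, ∃ y,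
      y ∈ Ioo ((e ⟨i, by omega⟩ : ℝ)) ((e ⟨i+1, hi⟩ : ℝ)) ∧ deriv g y = 0 := by
    intro i hi
    have hab' : ((e ⟨i, by omega⟩ : ℝ)) < ((e ⟨i+1, hi⟩ : ℝ)) := by
      apply hlt
      simp [Fin.lt_def]
    obtain ⟨y, hy1, hy2⟩ := exists_deriv_eq_zero hab' hgd.continuous.continuousOn
      (by rw [hzero, hzero])
    exact ⟨y, hy1, hy2⟩
  choose y hy1 hy2 using hchoice
  have hklarge : 1 ≤ k := by omega
  have hargs : ∀ i : Fin (k-1), i.1 + 1 < k := fun i => by omega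
  set Y : Fin (k-1) → ℝ := fun i => y i.1 (hargs i) with hY
  have hYmono : StrictMono Y := by
    intro i j hij
    have h1 : Y i < ((e ⟨i.1+1, hargs i⟩ : ℝ)) := (hy1 i.1 (hargs i)).2
    have h2 : ((e ⟨j.1, by omega⟩ : ℝ)) < Y j := (hy1 j.1 (hargs j)).1
    have h3 : ((e ⟨i.1+1, hargs i⟩ : ℝ)) ≤ ((e ⟨j.1, by omega⟩ : ℝ)) := by
      apply hle
      simp only [Fin.le_def]
      exact hij
    linarith
  set T : Finset ℝ := Finset.image Y Finset.univ with hT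
  have hTcard : T.card = k - 1 := by
    rw [hT, Finset.card_image_of_injective _ hYmono.injective, Finset.card_univ, Fintype.card_fin]
  have hTsub : ↑T ⊆ {t ∈ Icc a b | deriv g t = 0} := by
    intro x hx
    rw [hT, Finset.coe_image] at hx
    obtain ⟨i, _, rfl⟩ := hx
    have hIoo := hy1 i.1 (hargs i)
    have hL := (hmemI ⟨i.1, by omega⟩).1
    have hR := (hmemI ⟨i.1+1, hargs i⟩).2
    exact ⟨⟨le_of_lt (lt_of_le_of_lt hL hIoo.1), le_of_lt (lt_of_lt_of_le hIoo.2 hR)⟩,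
      hy2 i.1 (hargs i)⟩
  have := h T hTsub
  omega

lemma finset_bound_finite {S : Set ℝ} {m : ℕ}
    (h : ∀ s : Finset ℝ, ↑s ⊆ S → s.card ≤ m) : S.Finite ∧ S.ncard ≤ m := by
  have hfin : S.Finite := by
    by_contra hinf
    obtain ⟨t, hts, htc⟩ := Set.Infinite.exists_subset_card_eq hinf (m+1)
    have := h t hts
    omega
  refine ⟨hfin, ?_⟩
  have := h hfin.toFinset (by simp)
  rwa [Set.ncard_eq_toFinset_card S hfin]

lemma zeros_bound {ψ : ℝ → ℝ} (hψ : ContDiff ℝ ∞ ψ) {a b : ℝ} {ℓ : ℕ}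
    (hnz : ∀ t ∈ Icc a b, iteratedDeriv ℓ ψ t ≠ 0) :
    ∀ d j : ℕ, j + d = ℓ →
      ∀ s : Finset ℝ, ↑s ⊆ {t ∈ Icc a b | iteratedDeriv j ψ t = 0} → s.card ≤ d := by
  intro d
  induction d with
  | zero =>
    intro j hj s hs
    have hjl : j = ℓ := by omega
    subst hjl
    by_contra hcon
    have : s.Nonempty := by
      rw [← Finset.card_pos]; omega
    obtain ⟨x, hx⟩ := this
    have := hs hx
    exact hnz x this.1 this.2
  | succ d ih =>
    intro j hj s hs
    apply rolle_count (diff_iter hψ j) _ s hs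
    intro s' hs'
    apply ih (j+1) (by omega) s'
    intro x hx
    have hmem := hs' hx
    refine ⟨hmem.1, ?_⟩
    rw [iteratedDeriv_succ]
    exact hmem.2

lemma ncard_biUnion_le (I : Finset ℕ) (f : ℕ → Set ℝ) (m : ℕ)
    (hm : ∀ j ∈ I, (f j).Finite ∧ (f j).ncard ≤ m) :
    (⋃ j ∈ I, f j).Finite ∧ (⋃ j ∈ I, f j).ncard ≤ I.card * m := by
  induction I using Finset.induction with
  | empty => simp
  | @insert x I' hx ih =>
    have hx' := hm x (Finset.mem_insert_self x I')
    have ih' := ih (fun j hj => hm j (Finset.mem_insert_of_mem hj))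
    rw [Finset.set_biUnion_insert]
    have hfin : (f x ∪ ⋃ j ∈ I', f j).Finite := hx'.1.union ih'.1
    refine ⟨hfin, ?_⟩
    calc (f x ∪ ⋃ j ∈ I', f j).ncard ≤ (f x).ncard + (⋃ j ∈ I', f j).ncard :=
        Set.ncard_union_le _ _
      _ ≤ m + I'.card * m := add_le_add hx'.2 ih'.2
      _ = (insert x I').card * m := by
          rw [Finset.card_insert_of_notMem hx]; ring


lemma sc_from_open {h : ℝ → ℝ} (hc : Continuous h) {p q : ℝ} (hlt : p < q)
    (hne : ∀ t ∈ Ioo p q, h t ≠ 0) : SC h (Icc p q) := by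
  have hstrict := sc_of_ne ordConnected_Ioo hc.continuousOn hne
  have hclos : Icc p q = closure (Ioo p q) := (closure_Ioo hlt.ne).symm
  rcases hstrict with hpos | hneg
  · left
    intro t ht
    rw [hclos] at ht
    have hsub : closure (Ioo p q) ⊆ {x | 0 ≤ h x} :=
      (isClosed_le continuous_const hc).closure_subset_iff.mpr (fun x hx => (hpos x hx).le)
    exact hsub ht
  · right
    intro t ht
    rw [hclos] at ht
    have hsub : closure (Ioo p q) ⊆ {x | h x ≤ 0} :=
      (isClosed_le hc continuous_const).closure_subset_iff.mpr (fun x hx => (hneg x hx).le)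
    exact hsub ht

lemma partition {ψ : ℝ → ℝ} (hψ : ContDiff ℝ ∞ ψ) {a b : ℝ} {ℓ : ℕ} (hl2 : 2 ≤ ℓ)
    {lam : ℝ} (hlam : 0 < lam)
    (hnz : ∀ t ∈ Icc a b, iteratedDeriv ℓ ψ t ≠ 0)
    (hmax : ∀ t ∈ Icc a b, ∃ j, 1 ≤ j ∧ j ≤ ℓ ∧ lam ^ j ≤ |iteratedDeriv j ψ t|)
    (hfin : {t ∈ Icc a b | ∃ j, 1 ≤ j ∧ j ≤ ℓ - 1 ∧ iteratedDeriv j ψ t = 0}.Finite) :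
    ∀ m : ℕ, ∀ p q : ℝ, p ≤ q → Icc p q ⊆ Icc a b →
      ({t ∈ Ioo p q | ∃ j, 1 ≤ j ∧ j ≤ ℓ - 1 ∧ iteratedDeriv j ψ t = 0}).ncard ≤ m →
      ‖∫ t in p..q, E (fun s => 2 * π * ψ s) t‖ ≤
        ((m:ℝ) + 1) * ((ℓ:ℝ) * (6 * 2 ^ ℓ)) / lam := by
  intro m
  induction m using Nat.strong_induction_on with
  | _ m ih =>
  intro p q hpq hsub hcount
  have hBpos : (0:ℝ) ≤ (ℓ:ℝ) * (6 * 2 ^ ℓ) / lam := by positivity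
  have hlocfin : ∀ p' q' : ℝ, Icc p' q' ⊆ Icc a b →
      {t ∈ Ioo p' q' | ∃ j, 1 ≤ j ∧ j ≤ ℓ - 1 ∧ iteratedDeriv j ψ t = 0}.Finite := by
    intro p' q' hsub'
    apply hfin.subset
    intro t ht
    exact ⟨hsub' (Ioo_subset_Icc_self ht.1), ht.2⟩
  by_cases hex : ∃ z ∈ Ioo p q, ∃ j, 1 ≤ j ∧ j ≤ ℓ - 1 ∧ iteratedDeriv j ψ z = 0
  · obtain ⟨z, hz, hbz⟩ := hex
    have hzpq : z ∈ Icc p q := Ioo_subset_Icc_self hz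
    have hsubL : Icc p z ⊆ Icc a b := (Icc_subset_Icc le_rfl hzpq.2).trans hsub
    have hsubR : Icc z q ⊆ Icc a b := (Icc_subset_Icc hzpq.1 le_rfl).trans hsub
    set SL := {t ∈ Ioo p z | ∃ j, 1 ≤ j ∧ j ≤ ℓ - 1 ∧ iteratedDeriv j ψ t = 0} with hSL
    set SR := {t ∈ Ioo z q | ∃ j, 1 ≤ j ∧ j ≤ ℓ - 1 ∧ iteratedDeriv j ψ t = 0} with hSR
    have hfinL : SL.Finite := hlocfin p z hsubL
    have hfinR : SR.Finite := hlocfin z q hsubR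
    set m₁ := SL.ncard with hm₁
    set m₂ := SR.ncard with hm₂
    have hdisj : Disjoint SL SR := by
      rw [Set.disjoint_left]
      intro t h1 h2
      have := h1.1.2
      have := h2.1.1
      linarith
    have hznot : z ∉ SL ∪ SR := by
      intro hcon
      rcases hcon with hcon | hcon
      · exact absurd hcon.1.2 (lt_irrefl z)
      · exact absurd hcon.1.1 (lt_irrefl z)
    have hkey : m₁ + m₂ + 1 ≤ m := by
      have hsubbig : insert z (SL ∪ SR) ⊆
          {t ∈ Ioo p q | ∃ j, 1 ≤ j ∧ j ≤ ℓ - 1 ∧ iteratedDeriv j ψ t = 0} := by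
        intro t ht
        rcases ht with rfl | ht
        · exact ⟨hz, hbz⟩
        · rcases ht with ht | ht
          · exact ⟨⟨ht.1.1, ht.1.2.trans hz.2⟩, ht.2⟩
          · exact ⟨⟨hz.1.trans ht.1.1, ht.1.2⟩, ht.2⟩
      have h1 : (SL ∪ SR).ncard = m₁ + m₂ := Set.ncard_union_eq hdisj hfinL hfinR
      have h2 : (insert z (SL ∪ SR)).ncard = m₁ + m₂ + 1 := by
        rw [Set.ncard_insert_of_notMem hznot (hfinL.union hfinR), h1]
      have h3 : (insert z (SL ∪ SR)).ncard ≤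
          ({t ∈ Ioo p q | ∃ j, 1 ≤ j ∧ j ≤ ℓ - 1 ∧ iteratedDeriv j ψ t = 0}).ncard :=
        Set.ncard_le_ncard hsubbig (hlocfin p q hsub)
      omega
    have hL := ih m₁ (by omega) p z hzpq.1 hsubL le_rfl
    have hR := ih m₂ (by omega) z q hzpq.2 hsubR le_rfl
    have hsplit : (∫ t in p..z, E (fun s => 2 * π * ψ s) t) +
        ∫ t in z..q, E (fun s => 2 * π * ψ s) t = ∫ t in p..q, E (fun s => 2 * π * ψ s) t :=
      intervalIntegral.integral_add_adjacent_intervals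
        (intE (contDiff_const.mul hψ).continuous p z) (intE (contDiff_const.mul hψ).continuous z q)
    calc ‖∫ t in p..q, E (fun s => 2 * π * ψ s) t‖
        = ‖(∫ t in p..z, E (fun s => 2 * π * ψ s) t) +
            ∫ t in z..q, E (fun s => 2 * π * ψ s) t‖ := by rw [hsplit]
      _ ≤ ‖∫ t in p..z, E (fun s => 2 * π * ψ s) t‖ +
            ‖∫ t in z..q, E (fun s => 2 * π * ψ s) t‖ := norm_add_le _ _
      _ ≤ ((m₁:ℝ) + 1) * ((ℓ:ℝ) * (6 * 2 ^ ℓ)) / lam +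
            ((m₂:ℝ) + 1) * ((ℓ:ℝ) * (6 * 2 ^ ℓ)) / lam := add_le_add hL hR
      _ ≤ ((m:ℝ) + 1) * ((ℓ:ℝ) * (6 * 2 ^ ℓ)) / lam := by
          rw [← add_div]
          gcongr ?_ / lam
          have hc : (m₁:ℝ) + m₂ + 2 ≤ (m:ℝ) + 1 := by
            have : ((m₁ + m₂ + 1 : ℕ) : ℝ) ≤ (m:ℝ) := Nat.cast_le.mpr hkey
            push_cast at this
            linarith
          have hX : (0:ℝ) ≤ (ℓ:ℝ) * (6 * 2 ^ ℓ) := by positivity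
          nlinarith
  · push_neg at hex
    rcases eq_or_lt_of_le hpq with heq | hlt
    · rw [← heq, intervalIntegral.integral_same]
      simp only [norm_zero]
      positivity
    · have hscall : ∀ j, 1 ≤ j → j ≤ ℓ → SC (iteratedDeriv j ψ) (Icc p q) := by
        intro j hj1 hj2
        rcases eq_or_lt_of_le hj2 with hje | hjl
        · -- j = ℓ
          subst hje
          have hne' : ∀ t ∈ Icc p q, iteratedDeriv j ψ t ≠ 0 := fun t ht => hnz t (hsub ht)
          rcases sc_of_ne ordConnected_Icc (cont_iter hψ j).continuousOn hne' with hh | hh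
          · exact Or.inl fun t ht => (hh t ht).le
          · exact Or.inr fun t ht => (hh t ht).le
        · have hne' : ∀ t ∈ Ioo p q, iteratedDeriv j ψ t ≠ 0 := by
            intro t ht h0
            exact hex t ht j hj1 (by omega) h0
          exact sc_from_open (cont_iter hψ j) hlt hne'
      have hmax' : ∀ t ∈ Icc p q, ∃ j, 1 ≤ j ∧ j ≤ ℓ ∧ lam ^ j ≤ |iteratedDeriv j ψ t| :=
        fun t ht => hmax t (hsub ht)
      have hW := Wlem ℓ hl2 lam hlam (ℓ-1) ψ hψ 1 le_rfl (by omega) p q hpq hscall hmax'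
      apply hW.trans
      have hcast : ((ℓ - 1 : ℕ) : ℝ) + 1 = (ℓ:ℝ) := by
        have h1 : 1 ≤ ℓ := by omega
        push_cast [Nat.cast_sub h1]
        ring
      rw [hcast]
      gcongr ?_ / lam
      have hX : (0:ℝ) ≤ (ℓ:ℝ) * (6 * 2 ^ ℓ) := by positivity
      nlinarith [Nat.cast_nonneg (α := ℝ) m]


section Euclid

variable {n : ℕ}

lemma cont_iterV {γ : ℝ → EuclideanSpace ℝ (Fin n)} (hγ : ContDiff ℝ ∞ γ) (j : ℕ) :
    Continuous (iteratedDeriv j γ) := by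
  rw [iteratedDeriv_eq_iterate]
  exact ((ContDiff.iterate_deriv j hγ).differentiable (by norm_num)).continuous

lemma clm_iter (L : EuclideanSpace ℝ (Fin n) →L[ℝ] ℝ) {γ : ℝ → EuclideanSpace ℝ (Fin n)}
    (hγ : ContDiff ℝ ∞ γ) (j : ℕ) (t : ℝ) :
    iteratedDeriv j (fun s => L (γ s)) t = L (iteratedDeriv j γ t) := by
  have hL := L.iteratedFDeriv_comp_left hγ.contDiffAt (x := t) (i := j) (by exact_mod_cast le_top)
  rw [iteratedDeriv_eq_iteratedFDeriv, iteratedDeriv_eq_iteratedFDeriv]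
  rw [show (fun s => L (γ s)) = L ∘ γ from rfl, hL]
  simp [ContinuousLinearMap.compContinuousMultilinearMap_coe]

lemma sum_eq_inner (ξ x : EuclideanSpace ℝ (Fin n)) :
    ∑ i, x i * ξ i = (innerSL ℝ ξ) x := by
  rw [innerSL_apply_apply]
  rw [PiLp.inner_apply]
  simp [RCLike.inner_apply, conj_trivial, mul_comm]

lemma sum_iter {γ : ℝ → EuclideanSpace ℝ (Fin n)} (hγ : ContDiff ℝ ∞ γ)
    (ξ : EuclideanSpace ℝ (Fin n)) (j : ℕ) (t : ℝ) :
    iteratedDeriv j (fun s => ∑ i, γ s i * ξ i) t = ∑ i, iteratedDeriv j γ t i * ξ i := by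
  have h1 : (fun s => ∑ i, γ s i * ξ i) = fun s => (innerSL ℝ ξ) (γ s) := by
    funext s; exact sum_eq_inner ξ (γ s)
  rw [h1, clm_iter (innerSL ℝ ξ) hγ j t, ← sum_eq_inner ξ (iteratedDeriv j γ t)]

lemma sum_abs_le (ξ x : EuclideanSpace ℝ (Fin n)) :
    |∑ i, x i * ξ i| ≤ ‖x‖ * ‖ξ‖ := by
  rw [sum_eq_inner, innerSL_apply_apply]
  calc |(inner ℝ ξ x : ℝ)| ≤ ‖ξ‖ * ‖x‖ := abs_real_inner_le_norm ξ x
    _ = ‖x‖ * ‖ξ‖ := mul_comm _ _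

lemma Mbound {γ : ℝ → EuclideanSpace ℝ (Fin n)} (hγ : ContDiff ℝ ∞ γ) (N : ℕ) :
    ∃ M : ℝ, 1 ≤ M ∧ ∀ j ≤ N, ∀ t ∈ Icc (-2:ℝ) 2, ‖iteratedDeriv j γ t‖ ≤ M := by
  induction N with
  | zero =>
    obtain ⟨M₀, hM₀⟩ := isCompact_Icc.exists_bound_of_continuousOn
      (cont_iterV hγ 0).continuousOn
    refine ⟨max M₀ 1, le_max_right _ _, ?_⟩
    intro j hj t ht
    interval_cases j
    exact (hM₀ t ht).trans (le_max_left _ _)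
  | succ N ih =>
    obtain ⟨M, hM1, hM⟩ := ih
    obtain ⟨M₀, hM₀⟩ := isCompact_Icc.exists_bound_of_continuousOn
      (cont_iterV hγ (N+1)).continuousOn
    refine ⟨max M M₀, le_trans hM1 (le_max_left _ _), ?_⟩
    intro j hj t ht
    rcases Nat.lt_or_ge j (N+1) with hj' | hj'
    · exact (hM j (by omega) t ht).trans (le_max_left _ _)
    · have : j = N + 1 := by omega
      subst this
      exact (hM₀ t ht).trans (le_max_right _ _)

end Euclid

end ACKproof

set_option maxHeartbeats 2000000 in
/-- Arkhipov–Chubarikov–Karatsuba-type oscillatory integral estimate: if some derivative of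
the phase is bounded below on `I`, the oscillatory integral is dominated by `(1 + H_γ(ξ))⁻¹`. -/
theorem ACK_type_estimate
    {n : ℕ} (hn : 1 ≤ n) (γ : ℝ → EuclideanSpace ℝ (Fin n)) (hγ : ContDiff ℝ (⊤ : ℕ∞) γ)
    (a b : ℝ) (hI : Set.Icc a b ⊆ Set.Icc (-2 : ℝ) 2) (c : ℝ) (hc : 0 < c) :
    ∃ C > 0, ∀ ξ : EuclideanSpace ℝ (Fin n), ∀ ℓ : ℕ, 1 ≤ ℓ → ℓ ≤ n →
      (∀ t ∈ Set.Icc a b, c * ‖ξ‖ < |∑ i, iteratedDeriv ℓ γ t i * ξ i|) →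
      ‖∫ t in Set.Icc a b,
          Complex.exp (2 * Real.pi * Complex.I * ((∑ i, γ t i * ξ i : ℝ) : ℂ))‖ ≤
        C * (1 + Hfun n γ (Set.Icc a b) ξ)⁻¹ := by
  classical
  have hgi : ContDiff ℝ ∞ γ := hγ.of_le (by simp)
  obtain ⟨M, hM1, hM⟩ := ACKproof.Mbound hgi (n+1)
  set K : ℝ := max 1 (M / c) with hKdef
  have hK1 : (1:ℝ) ≤ K := le_max_left _ _
  have hKpos : (0:ℝ) < K := by linarith
  have hMc : M / c ≤ K := le_max_right _ _
  set C₀ : ℝ := ((n:ℝ) * n + 1) * ((n:ℝ) * (6 * 2 ^ n)) with hC₀def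
  have hn' : (1:ℝ) ≤ (n:ℝ) := by exact_mod_cast hn
  have hC₀pos : (0:ℝ) < C₀ := by
    rw [hC₀def]
    have h1 : (0:ℝ) < (n:ℝ) := by linarith
    exact mul_pos (by positivity) (mul_pos h1 (by positivity))
  set K₃ : ℝ := 1 / c + 2 * M / c ^ 2 with hK₃def
  have hK₃pos : 0 < K₃ := by
    have h1 : (0:ℝ) < 1 / c := by positivity
    have h2 : (0:ℝ) < 2 * M / c ^ 2 := by
      apply div_pos (by linarith) (by positivity)
    rw [hK₃def]
    linarith
  set C : ℝ := 4 * (1 + 2 * K) + 4 * (2 + M) + K₃ * (2 + M) + 3 * K * C₀ with hCdef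
  have hCpos : 0 < C := by
    rw [hCdef]
    nlinarith [mul_pos hK₃pos (show (0:ℝ) < 2 + M by linarith), mul_pos hKpos hC₀pos, hK1, hM1, hKpos, hC₀pos, hK₃pos]
  refine ⟨C, hCpos, ?_⟩
  intro ξ ℓ hℓ1 hℓn hhyp
  set H := Hfun n γ (Set.Icc a b) ξ with hHdef
  have hH0 : 0 ≤ H := by
    rw [hHdef]
    unfold Hfun
    apply Real.sInf_nonneg
    rintro x ⟨t, _, rfl⟩
    exact Real.iSup_nonneg fun r => Real.rpow_nonneg (abs_nonneg _) _
  have h1H : (0:ℝ) < 1 + H := by linarith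
  rw [show C * (1 + H)⁻¹ = C / (1 + H) from (div_eq_mul_inv C _).symm, le_div_iff₀ h1H]
  rcases lt_or_ge b a with hba | hab
  · rw [Set.Icc_eq_empty (not_le.mpr hba), MeasureTheory.setIntegral_empty]
    simp only [norm_zero, zero_mul]
    exact hCpos.le
  rcases eq_or_ne ξ 0 with rfl | hξ
  · exfalso
    have := hhyp a (Set.left_mem_Icc.mpr hab)
    simp at this
  have hξpos : 0 < ‖ξ‖ := norm_pos_iff.mpr hξ
  have ha2 : (-2:ℝ) ≤ a := (hI (Set.left_mem_Icc.mpr hab)).1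
  have hb2 : b ≤ 2 := (hI (Set.right_mem_Icc.mpr hab)).2
  set ψ : ℝ → ℝ := fun s => ∑ i, γ s i * ξ i with hψdef
  have hψ : ContDiff ℝ ∞ ψ := by
    have h1 : ψ = fun s => (innerSL ℝ ξ) (γ s) := funext fun s => ACKproof.sum_eq_inner ξ (γ s)
    rw [h1]
    exact (innerSL ℝ ξ).contDiff.comp hgi
  have hiter : ∀ j t, iteratedDeriv j ψ t = ∑ i, iteratedDeriv j γ t i * ξ i :=
    fun j t => ACKproof.sum_iter hgi ξ j t
  have hfun_eq : (fun t => Complex.exp (2 * Real.pi * Complex.I * ((∑ i, γ t i * ξ i : ℝ) : ℂ)))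
      = fun t => ACKproof.E (fun s => 2 * π * ψ s) t := by
    funext t
    show _ = Complex.exp (Complex.I * ((2 * π * ψ t : ℝ) : ℂ))
    congr 1
    simp only [hψdef]
    push_cast
    ring
  have hint_eq : (∫ t in Set.Icc a b,
      Complex.exp (2 * Real.pi * Complex.I * ((∑ i, γ t i * ξ i : ℝ) : ℂ)))
      = ∫ t in a..b, ACKproof.E (fun s => 2 * π * ψ s) t := by
    rw [MeasureTheory.integral_Icc_eq_integral_Ioc, ← intervalIntegral.integral_of_le hab,
      hfun_eq]
  rw [hint_eq]
  have htriv : ‖∫ t in a..b, ACKproof.E (fun s => 2 * π * ψ s) t‖ ≤ 4 :=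
    (ACKproof.trivE hab).trans (by linarith)
  have hhyp' : ∀ t ∈ Set.Icc a b, c * ‖ξ‖ < |iteratedDeriv ℓ ψ t| := by
    intro t ht
    rw [hiter]
    exact hhyp t ht
  have hDb : ∀ j ≤ n + 1, ∀ t ∈ Set.Icc a b, |iteratedDeriv j ψ t| ≤ M * ‖ξ‖ := by
    intro j hj t ht
    rw [hiter]
    calc |∑ i, iteratedDeriv j γ t i * ξ i| ≤ ‖iteratedDeriv j γ t‖ * ‖ξ‖ :=
        ACKproof.sum_abs_le ξ _
      _ ≤ M * ‖ξ‖ := mul_le_mul_of_nonneg_right (hM j hj t (hI ht)) (norm_nonneg ξ)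
  -- pointwise domination of H
  have hHleG : ∀ t ∈ Set.Icc a b, ∃ j, 1 ≤ j ∧ j ≤ n ∧
      H ≤ |iteratedDeriv j ψ t| ^ ((j:ℝ))⁻¹ := by
    intro t ht
    have hbdd : BddBelow ((fun t => ⨆ r : Fin n,
        |∑ i, iteratedDeriv (r.1 + 1) γ t i * ξ i| ^ (((r.1 : ℝ) + 1)⁻¹)) '' Set.Icc a b) := by
      refine ⟨0, ?_⟩
      rintro x ⟨s, _, rfl⟩
      exact Real.iSup_nonneg fun r => Real.rpow_nonneg (abs_nonneg _) _
    have hmem : (⨆ r : Fin n,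
        |∑ i, iteratedDeriv (r.1 + 1) γ t i * ξ i| ^ (((r.1 : ℝ) + 1)⁻¹)) ∈
        ((fun t => ⨆ r : Fin n,
        |∑ i, iteratedDeriv (r.1 + 1) γ t i * ξ i| ^ (((r.1 : ℝ) + 1)⁻¹)) '' Set.Icc a b) :=
      Set.mem_image_of_mem _ ht
    have hHle1 : H ≤ ⨆ r : Fin n,
        |∑ i, iteratedDeriv (r.1 + 1) γ t i * ξ i| ^ (((r.1 : ℝ) + 1)⁻¹) := by
      rw [hHdef]
      unfold Hfun
      exact csInf_le hbdd hmem
    haveI : Nonempty (Fin n) := Fin.pos_iff_nonempty.mp (by omega)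
    obtain ⟨r₀, hr₀⟩ := Finite.exists_max (fun r : Fin n =>
        |∑ i, iteratedDeriv (r.1 + 1) γ t i * ξ i| ^ (((r.1 : ℝ) + 1)⁻¹))
    have hsup : (⨆ r : Fin n,
        |∑ i, iteratedDeriv (r.1 + 1) γ t i * ξ i| ^ (((r.1 : ℝ) + 1)⁻¹)) ≤
        |∑ i, iteratedDeriv (r₀.1 + 1) γ t i * ξ i| ^ (((r₀.1 : ℝ) + 1)⁻¹) := ciSup_le hr₀
    refine ⟨r₀.1 + 1, by omega, by have := r₀.isLt; omega, ?_⟩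
    have hcomb := hHle1.trans hsup
    have heq : |∑ i, iteratedDeriv (r₀.1 + 1) γ t i * ξ i| ^ (((r₀.1 : ℝ) + 1)⁻¹)
        = |iteratedDeriv (r₀.1 + 1) ψ t| ^ (((r₀.1 + 1 : ℕ) : ℝ))⁻¹ := by
      rw [hiter]
      congr 1
      push_cast
      ring
    rwa [heq] at hcomb
  have claimP : ∀ t ∈ Set.Icc a b, ∃ j, 1 ≤ j ∧ j ≤ ℓ ∧
      H ≤ K * (1 + |iteratedDeriv j ψ t| ^ ((j:ℝ))⁻¹) := by
    intro t ht
    obtain ⟨j, hj1, hjn, hHj⟩ := hHleG t ht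
    rcases le_or_gt j ℓ with hcase | hcase
    · refine ⟨j, hj1, hcase, ?_⟩
      have hY : 0 ≤ |iteratedDeriv j ψ t| ^ ((j:ℝ))⁻¹ := Real.rpow_nonneg (abs_nonneg _) _
      nlinarith
    · refine ⟨ℓ, hℓ1, le_rfl, ?_⟩
      set X := |iteratedDeriv ℓ ψ t| ^ ((ℓ:ℝ))⁻¹ with hXdef
      have hX0 : 0 ≤ X := Real.rpow_nonneg (abs_nonneg _) _
      have hXpow : X ^ ℓ = |iteratedDeriv ℓ ψ t| :=
        Real.rpow_inv_natCast_pow (abs_nonneg _) (by omega)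
      have h2 : ‖ξ‖ ≤ |iteratedDeriv ℓ ψ t| / c := by
        rw [le_div_iff₀ hc]
        have := hhyp' t ht
        nlinarith
      have h1 : |iteratedDeriv j ψ t| ≤ M * ‖ξ‖ := hDb j (by omega) t ht
      have h3 : M * ‖ξ‖ ≤ K * X ^ ℓ := by
        rw [hXpow]
        calc M * ‖ξ‖ ≤ M * (|iteratedDeriv ℓ ψ t| / c) :=
            mul_le_mul_of_nonneg_left h2 (by linarith)
          _ = (M / c) * |iteratedDeriv ℓ ψ t| := by ring
          _ ≤ K * |iteratedDeriv ℓ ψ t| := mul_le_mul_of_nonneg_right hMc (abs_nonneg _)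
      have h4 : K * X ^ ℓ ≤ K * (1 + X) ^ j := by
        have e1 : X ^ ℓ ≤ (1 + X) ^ ℓ := pow_le_pow_left₀ hX0 (by linarith) ℓ
        have e2 : (1 + X) ^ ℓ ≤ (1 + X) ^ j := pow_le_pow_right₀ (by linarith) (by omega)
        nlinarith
      have h5 : |iteratedDeriv j ψ t| ^ ((j:ℝ))⁻¹ ≤ (K * (1 + X) ^ j) ^ ((j:ℝ))⁻¹ :=
        Real.rpow_le_rpow (abs_nonneg _) (h1.trans (h3.trans h4)) (by positivity)
      have h6 : (K * (1 + X) ^ j) ^ ((j:ℝ))⁻¹ = K ^ ((j:ℝ))⁻¹ * ((1 + X) ^ j) ^ ((j:ℝ))⁻¹ :=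
        Real.mul_rpow (by linarith) (by positivity)
      have h7 : (((1 + X) ^ j : ℝ)) ^ ((j:ℝ))⁻¹ = 1 + X :=
        Real.pow_rpow_inv_natCast (by linarith) (by omega)
      have hj1R : (1:ℝ) ≤ (j:ℝ) := by exact_mod_cast hj1
      have h8 : K ^ ((j:ℝ))⁻¹ ≤ K := by
        calc K ^ ((j:ℝ))⁻¹ ≤ K ^ (1:ℝ) :=
            Real.rpow_le_rpow_of_exponent_le hK1 (by
              rw [inv_le_one_iff₀]
              right; exact hj1R)
          _ = K := Real.rpow_one K
      calc H ≤ |iteratedDeriv j ψ t| ^ ((j:ℝ))⁻¹ := hHj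
        _ ≤ K ^ ((j:ℝ))⁻¹ * (1 + X) := by rw [← h7, ← h6]; exact h5
        _ ≤ K * (1 + X) := mul_le_mul_of_nonneg_right h8 (by linarith)
  have hHle : H ≤ 1 + M * ‖ξ‖ := by
    obtain ⟨j, hj1, hjn, hHj⟩ := hHleG a (Set.left_mem_Icc.mpr hab)
    have hb' := hDb j (by omega) a (Set.left_mem_Icc.mpr hab)
    have h0 : 0 ≤ M * ‖ξ‖ := mul_nonneg (by linarith) (norm_nonneg _)
    have hj1R : (1:ℝ) ≤ (j:ℝ) := by exact_mod_cast hj1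
    rcases le_or_gt (M * ‖ξ‖) 1 with hsml | hbig
    · have : |iteratedDeriv j ψ a| ^ ((j:ℝ))⁻¹ ≤ 1 :=
        Real.rpow_le_one (abs_nonneg _) (hb'.trans hsml) (by positivity)
      linarith
    · have e1 : |iteratedDeriv j ψ a| ^ ((j:ℝ))⁻¹ ≤ (M * ‖ξ‖) ^ ((j:ℝ))⁻¹ :=
        Real.rpow_le_rpow (abs_nonneg _) hb' (by positivity)
      have e2 : (M * ‖ξ‖) ^ ((j:ℝ))⁻¹ ≤ (M * ‖ξ‖) ^ (1:ℝ) :=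
        Real.rpow_le_rpow_of_exponent_le hbig.le (by
          rw [inv_le_one_iff₀]; right; exact hj1R)
      rw [Real.rpow_one] at e2
      linarith
  rcases eq_or_lt_of_le hℓ1 with hl1 | hl2
  · -- ℓ = 1 : direct integration by parts
    have hℓeq : ℓ = 1 := hl1.symm
    subst hℓeq
    set f2 : ℝ → ℝ := fun s => 2 * π * ψ s with hf2def
    have hf2 : ContDiff ℝ ∞ f2 := contDiff_const.mul hψ
    have hd1 : deriv f2 = fun t => 2 * π * iteratedDeriv 1 ψ t := by
      rw [← iteratedDeriv_one (f := f2), hf2def, ACKproof.iter_cmul hψ (2 * π) 1]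
    have hd2 : deriv (deriv f2) = fun t => 2 * π * iteratedDeriv 2 ψ t := by
      funext t
      rw [hd1]
      rw [deriv_const_mul _ ((ACKproof.diff_iter hψ 1) t), ← iteratedDeriv_succ]
    set mu : ℝ := 2 * π * (c * ‖ξ‖) with hmudef
    have hπ : (0:ℝ) < π := pi_pos
    have hmupos : 0 < mu := by positivity
    have hmulow : ∀ t ∈ Set.Icc a b, mu ≤ |deriv f2 t| := by
      intro t ht
      rw [hd1]
      show mu ≤ |2 * π * iteratedDeriv 1 ψ t|
      rw [abs_mul, abs_of_nonneg (show (0:ℝ) ≤ 2 * π by positivity)]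
      have := hhyp' t ht
      rw [hmudef]
      nlinarith
    have core := ACKproof.ibp_core hf2 hab hmupos hmulow
    have hCC : ∀ t ∈ Set.uIoc a b,
        ‖|deriv (deriv f2) t| / (deriv f2 t) ^ 2‖ ≤ (2 * π * (M * ‖ξ‖)) / mu ^ 2 := by
      intro t ht
      rw [Set.uIoc_of_le hab] at ht
      have htI : t ∈ Set.Icc a b := Set.Ioc_subset_Icc_self ht
      have hnum : |deriv (deriv f2) t| ≤ 2 * π * (M * ‖ξ‖) := by
        rw [hd2]
        show |2 * π * iteratedDeriv 2 ψ t| ≤ _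
        rw [abs_mul, abs_of_nonneg (show (0:ℝ) ≤ 2 * π by positivity)]
        have := hDb 2 (by omega) t htI
        nlinarith
      have hden : mu ^ 2 ≤ (deriv f2 t) ^ 2 := by
        have := hmulow t htI
        calc mu ^ 2 ≤ |deriv f2 t| ^ 2 := by nlinarith [abs_nonneg (deriv f2 t)]
          _ = (deriv f2 t) ^ 2 := sq_abs _
      rw [Real.norm_eq_abs, abs_of_nonneg (div_nonneg (abs_nonneg _) (sq_nonneg _))]
      exact div_le_div₀ (by positivity) hnum (by positivity) hden
    have hintb : (∫ t in a..b, |deriv (deriv f2) t| / (deriv f2 t) ^ 2)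
        ≤ 4 * ((2 * π * (M * ‖ξ‖)) / mu ^ 2) := by
      have hb1 := intervalIntegral.norm_integral_le_of_norm_le_const hCC
      have hba4 : |b - a| ≤ 4 := by rw [abs_of_nonneg (by linarith)]; linarith
      have hC' : (0:ℝ) ≤ (2 * π * (M * ‖ξ‖)) / mu ^ 2 := by positivity
      calc (∫ t in a..b, |deriv (deriv f2) t| / (deriv f2 t) ^ 2)
          ≤ ‖∫ t in a..b, |deriv (deriv f2) t| / (deriv f2 t) ^ 2‖ := le_abs_self _
        _ ≤ (2 * π * (M * ‖ξ‖)) / mu ^ 2 * |b - a| := hb1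
        _ ≤ 4 * ((2 * π * (M * ‖ξ‖)) / mu ^ 2) := by nlinarith
    have hKey : 2 / mu + 4 * ((2 * π * (M * ‖ξ‖)) / mu ^ 2) ≤ K₃ / ‖ξ‖ := by
      have hπ3 : (3:ℝ) < π := pi_gt_three
      have e1 : 2 / mu ≤ (1 / c) / ‖ξ‖ := by
        rw [show (1 / c) / ‖ξ‖ = 1 / (c * ‖ξ‖) by rw [div_div], hmudef]
        rw [div_le_div_iff₀ (by positivity) (by positivity)]
        nlinarith [mul_pos hc hξpos]
      have e2 : 4 * ((2 * π * (M * ‖ξ‖)) / mu ^ 2) ≤ (2 * M / c ^ 2) / ‖ξ‖ := by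
        have heq2 : 4 * ((2 * π * (M * ‖ξ‖)) / mu ^ 2) = 2 * M / (π * c ^ 2 * ‖ξ‖) := by
          rw [hmudef]
          field_simp
          ring
        rw [heq2, show (2 * M / c ^ 2) / ‖ξ‖ = 2 * M / (c ^ 2 * ‖ξ‖) by rw [div_div]]
        apply div_le_div_of_nonneg_left (by linarith) (by positivity)
        nlinarith [sq_nonneg c, mul_pos (mul_pos hc hc) hξpos]
      calc 2 / mu + 4 * ((2 * π * (M * ‖ξ‖)) / mu ^ 2)
          ≤ (1 / c) / ‖ξ‖ + (2 * M / c ^ 2) / ‖ξ‖ := add_le_add e1 e2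
        _ = K₃ / ‖ξ‖ := by rw [hK₃def, ← add_div]
    have hIb : ‖∫ t in a..b, ACKproof.E f2 t‖ ≤ K₃ / ‖ξ‖ :=
      core.trans ((add_le_add_right hintb _).trans hKey)
    rcases le_or_gt ‖ξ‖ 1 with hs1 | hs1
    · have hH2 : 1 + H ≤ 2 + M := by nlinarith
      calc ‖∫ t in a..b, ACKproof.E f2 t‖ * (1 + H) ≤ 4 * (2 + M) :=
          mul_le_mul htriv hH2 h1H.le (by norm_num)
        _ ≤ C := by rw [hCdef]; nlinarith [mul_pos hK₃pos (show (0:ℝ) < 2 + M by linarith), mul_pos hKpos hC₀pos, hK1, hM1, hKpos, hC₀pos, hK₃pos]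
    · have hH2 : 1 + H ≤ (2 + M) * ‖ξ‖ := by nlinarith
      calc ‖∫ t in a..b, ACKproof.E f2 t‖ * (1 + H)
          ≤ (K₃ / ‖ξ‖) * ((2 + M) * ‖ξ‖) :=
          mul_le_mul hIb hH2 h1H.le (by positivity)
        _ = K₃ * (2 + M) := by field_simp
        _ ≤ C := by rw [hCdef]; nlinarith [mul_pos hK₃pos (show (0:ℝ) < 2 + M by linarith), mul_pos hKpos hC₀pos, hK1, hM1, hKpos, hC₀pos, hK₃pos]
  · -- 2 ≤ ℓ
    have hl2' : 2 ≤ ℓ := hl2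
    rcases le_or_gt H (2 * K) with hsmall | hbig
    · have hH2 : 1 + H ≤ 1 + 2 * K := by linarith
      calc ‖∫ t in a..b, ACKproof.E (fun s => 2 * π * ψ s) t‖ * (1 + H)
          ≤ 4 * (1 + 2 * K) := mul_le_mul htriv hH2 h1H.le (by norm_num)
        _ ≤ C := by rw [hCdef]; nlinarith [mul_pos hK₃pos (show (0:ℝ) < 2 + M by linarith), mul_pos hKpos hC₀pos, hK1, hM1, hKpos, hC₀pos, hK₃pos]
    · set lam : ℝ := H / K - 1 with hlamdef
      have hlam1 : 1 < lam := by
        have : 2 < H / K := (lt_div_iff₀ hKpos).mpr (by linarith)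
        rw [hlamdef]; linarith
      have hlampos : 0 < lam := by linarith
      have hHlam : H = K * (lam + 1) := by
        rw [hlamdef]
        field_simp
        ring
      have hmaxpt : ∀ t ∈ Set.Icc a b, ∃ j, 1 ≤ j ∧ j ≤ ℓ ∧
          lam ^ j ≤ |iteratedDeriv j ψ t| := by
        intro t ht
        obtain ⟨j, hj1, hj2, hj3⟩ := claimP t ht
        refine ⟨j, hj1, hj2, ?_⟩
        set Y := |iteratedDeriv j ψ t| ^ ((j:ℝ))⁻¹ with hYdef
        have hY0 : 0 ≤ Y := Real.rpow_nonneg (abs_nonneg _) _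
        have hlamY : lam ≤ Y := by
          rw [hHlam] at hj3
          nlinarith
        have hYpow : Y ^ j = |iteratedDeriv j ψ t| :=
          Real.rpow_inv_natCast_pow (abs_nonneg _) (by omega)
        calc lam ^ j ≤ Y ^ j := pow_le_pow_left₀ hlampos.le hlamY j
          _ = _ := hYpow
      have hnz : ∀ t ∈ Set.Icc a b, iteratedDeriv ℓ ψ t ≠ 0 := by
        intro t ht h0
        have := hhyp' t ht
        rw [h0] at this
        simp only [abs_zero] at this
        nlinarith
      set Z := {t ∈ Set.Icc a b | ∃ j, 1 ≤ j ∧ j ≤ ℓ - 1 ∧ iteratedDeriv j ψ t = 0} with hZdef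
      have hzb := ACKproof.zeros_bound hψ hnz
      have hZj : ∀ j ∈ Finset.Icc 1 (ℓ-1),
          ({t ∈ Set.Icc a b | iteratedDeriv j ψ t = 0}).Finite ∧
          ({t ∈ Set.Icc a b | iteratedDeriv j ψ t = 0}).ncard ≤ ℓ := by
        intro j hj
        obtain ⟨hj1, hj2⟩ := Finset.mem_Icc.mp hj
        obtain ⟨hfin, hcard⟩ := ACKproof.finset_bound_finite (hzb (ℓ - j) j (by omega))
        exact ⟨hfin, hcard.trans (by omega)⟩
      have hunion := ACKproof.ncard_biUnion_le (Finset.Icc 1 (ℓ-1))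
        (fun j => {t ∈ Set.Icc a b | iteratedDeriv j ψ t = 0}) ℓ hZj
      have hZsub : Z ⊆ ⋃ j ∈ Finset.Icc 1 (ℓ-1),
          {t ∈ Set.Icc a b | iteratedDeriv j ψ t = 0} := by
        rintro t ⟨ht, j, hj1, hj2, hj3⟩
        exact Set.mem_biUnion (Finset.mem_Icc.mpr ⟨hj1, hj2⟩) ⟨ht, hj3⟩
      have hZfin : Z.Finite := hunion.1.subset hZsub
      have hZcard : Z.ncard ≤ ℓ * ℓ := by
        have h1 := Set.ncard_le_ncard hZsub hunion.1
        have h3 : (Finset.Icc 1 (ℓ-1)).card ≤ ℓ := by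
          rw [Nat.card_Icc]; omega
        calc Z.ncard ≤ (Finset.Icc 1 (ℓ-1)).card * ℓ := h1.trans hunion.2
          _ ≤ ℓ * ℓ := Nat.mul_le_mul_right _ h3
      have hcount : ({t ∈ Set.Ioo a b |
          ∃ j, 1 ≤ j ∧ j ≤ ℓ - 1 ∧ iteratedDeriv j ψ t = 0}).ncard ≤ ℓ * ℓ := by
        refine le_trans (Set.ncard_le_ncard ?_ hZfin) hZcard
        intro t ht
        exact ⟨Set.Ioo_subset_Icc_self ht.1, ht.2⟩
      have hpart := ACKproof.partition hψ hl2' hlampos hnz hmaxpt hZfin (ℓ*ℓ) a b hab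
        (subset_refl _) hcount
      have hC₀mono : (((ℓ*ℓ:ℕ):ℝ) + 1) * ((ℓ:ℝ) * (6 * 2 ^ ℓ)) ≤ C₀ := by
        rw [hC₀def]
        push_cast
        have hℓn' : (ℓ:ℝ) ≤ (n:ℝ) := Nat.cast_le.mpr hℓn
        gcongr <;> first
          | exact hℓn'
          | exact hℓn
          | norm_num
      have hIb : ‖∫ t in a..b, ACKproof.E (fun s => 2 * π * ψ s) t‖ ≤ C₀ / lam := by
        apply hpart.trans
        gcongr ?_ / lam
      have h1Hb : 1 + H ≤ 3 * K * lam := by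
        rw [hHlam]
        nlinarith
      calc ‖∫ t in a..b, ACKproof.E (fun s => 2 * π * ψ s) t‖ * (1 + H)
          ≤ (C₀ / lam) * (3 * K * lam) :=
          mul_le_mul hIb h1Hb h1H.le (by positivity)
        _ = 3 * K * C₀ := by field_simp
        _ ≤ C := by rw [hCdef]; nlinarith [mul_pos hK₃pos (show (0:ℝ) < 2 + M by linarith), mul_pos hKpos hC₀pos, hK1, hM1, hKpos, hC₀pos, hK₃pos]
end

section
/- Let n ≥ 1 and let γ : ℝ → ℝⁿ be smooth and nondegenerate on [-2,2]. Then there exists a constant C > 0 (depending only on n and γ) such that for every ξ ∈ ℝⁿ: (1 + |ξ|)^{1/n} ≤ C (1 + H_γ(ξ)), where H_γ is the H-functional associated to γ on I = [-2,2] and |ξ| is the Euclidean norm. -/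
open MeasureTheory Real Set

/-- For a smooth nondegenerate curve, `(1 + |ξ|)^{1/n} ≤ C (1 + H_γ(ξ))`. -/
theorem H_functional_lower_bound
    {n : ℕ} (hn : 1 ≤ n) (γ : ℝ → EuclideanSpace ℝ (Fin n)) (hγ : ContDiff ℝ (⊤ : ℕ∞) γ)
    (hnondeg : ∀ t ∈ Set.Icc (-2 : ℝ) 2,
      (Matrix.of fun (i r : Fin n) => iteratedDeriv (r.1 + 1) γ t i).det ≠ 0) :
    ∃ C > 0, ∀ ξ : EuclideanSpace ℝ (Fin n),
      (1 + ‖ξ‖) ^ ((n : ℝ)⁻¹) ≤ C * (1 + Hfun n γ (Set.Icc (-2 : ℝ) 2) ξ) := by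
  haveI : Nonempty (Fin n) := Fin.pos_iff_nonempty.mp hn
  have hne : (Finset.univ : Finset (Fin n)).Nonempty := Finset.univ_nonempty
  have hder : ∀ m : ℕ, Continuous (iteratedDeriv m γ) := by
    intro m
    have hγ' : ContDiff ℝ ((⊤ : ℕ∞) : WithTop ℕ∞) γ := hγ.of_le (by simp)
    exact (contDiff_iff_iteratedDeriv.mp hγ').1 m le_top
  -- the sup of the absolute values of the pairings, as a function of `(t, ξ)`
  set g : ℝ × EuclideanSpace ℝ (Fin n) → ℝ :=
    fun p => Finset.univ.sup' hne
      (fun r : Fin n => |∑ i, iteratedDeriv (r.1 + 1) γ p.1 i * p.2 i|) with hgdef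
  have habsle : ∀ (q : ℝ × EuclideanSpace ℝ (Fin n)) (r : Fin n),
      |∑ i, iteratedDeriv (r.1 + 1) γ q.1 i * q.2 i| ≤ g q := fun q r =>
    Finset.le_sup' (fun r : Fin n => |∑ i, iteratedDeriv (r.1 + 1) γ q.1 i * q.2 i|)
      (Finset.mem_univ r)
  have hgcont : Continuous g := by
    apply Continuous.finset_sup'_apply hne
    intro r _
    apply Continuous.abs
    apply continuous_finset_sum
    intro i _
    exact ((PiLp.continuous_apply (p := 2) (β := fun _ : Fin n => ℝ) i).comp ((hder (r.1 + 1)).comp continuous_fst)).mul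
      ((PiLp.continuous_apply (p := 2) (β := fun _ : Fin n => ℝ) i).comp continuous_snd)
  -- the compact set `[-2,2] × S^{n-1}`
  set K : Set (ℝ × EuclideanSpace ℝ (Fin n)) :=
    (Set.Icc (-2 : ℝ) 2) ×ˢ (Metric.sphere (0 : EuclideanSpace ℝ (Fin n)) 1) with hKdef
  have hKc : IsCompact K := isCompact_Icc.prod (isCompact_sphere 0 1)
  have hKne : K.Nonempty := by
    refine ⟨(0, EuclideanSpace.single ⟨0, hn⟩ (1 : ℝ)), ⟨?_, ?_⟩⟩
    · constructor <;> norm_num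
    · simp [mem_sphere_iff_norm, EuclideanSpace.norm_single]
  obtain ⟨p₀, hp₀K, hmin⟩ := hKc.exists_isMinOn hKne hgcont.continuousOn
  set c : ℝ := g p₀ with hcdef
  -- positivity of the minimum
  have hc : 0 < c := by
    rcases lt_or_ge 0 c with h | h
    · exact h
    · exfalso
      obtain ⟨ht₀, hξ₀⟩ := hp₀K
      have hzero : ∀ r : Fin n, ∑ i, iteratedDeriv (r.1 + 1) γ p₀.1 i * p₀.2 i = 0 := by
        intro r
        have h1 : |∑ i, iteratedDeriv (r.1 + 1) γ p₀.1 i * p₀.2 i| ≤ c := habsle p₀ r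
        have := abs_nonneg (∑ i, iteratedDeriv (r.1 + 1) γ p₀.1 i * p₀.2 i)
        have : |∑ i, iteratedDeriv (r.1 + 1) γ p₀.1 i * p₀.2 i| = 0 := le_antisymm (h1.trans h) this
        exact abs_eq_zero.mp this
      have hv : (fun i => p₀.2 i) = 0 := by
        apply Matrix.eq_zero_of_vecMul_eq_zero (hnondeg p₀.1 ht₀)
        funext r
        have := hzero r
        simp only [Matrix.vecMul, dotProduct, Matrix.of_apply, Pi.zero_apply]
        rw [← this]
        exact Finset.sum_congr rfl fun i _ => mul_comm _ _
      have : ‖p₀.2‖ = 1 := mem_sphere_zero_iff_norm.mp hξ₀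
      have hz : p₀.2 = 0 := by
        ext i
        exact congrFun hv i
      rw [hz] at this
      simp at this
  -- the key uniform lower bound: `c * ‖ξ‖ ≤ g (t, ξ)` for `t ∈ [-2,2]`
  have hkey : ∀ t ∈ Set.Icc (-2 : ℝ) 2, ∀ ξ : EuclideanSpace ℝ (Fin n),
      c * ‖ξ‖ ≤ g (t, ξ) := by
    intro t ht ξ
    rcases eq_or_ne ξ 0 with rfl | hξ
    · simp only [norm_zero, mul_zero]
      exact le_trans (abs_nonneg _) (habsle (t, 0) (Classical.arbitrary (Fin n)))
    · have hξpos : 0 < ‖ξ‖ := norm_pos_iff.mpr hξ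
      set u : EuclideanSpace ℝ (Fin n) := ‖ξ‖⁻¹ • ξ with hudef
      have hu : ‖u‖ = 1 := norm_smul_inv_norm hξ
      have huK : (t, u) ∈ K := ⟨ht, mem_sphere_zero_iff_norm.mpr hu⟩
      have h1 : c ≤ g (t, u) := hmin huK
      have h2 : g (t, u) = ‖ξ‖⁻¹ * g (t, ξ) := by
        have habs : ∀ r : Fin n,
            |∑ i, iteratedDeriv (r.1 + 1) γ t i * u i|
              = ‖ξ‖⁻¹ * |∑ i, iteratedDeriv (r.1 + 1) γ t i * ξ i| := by
          intro r
          have : ∑ i, iteratedDeriv (r.1 + 1) γ t i * u i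
              = ‖ξ‖⁻¹ * ∑ i, iteratedDeriv (r.1 + 1) γ t i * ξ i := by
            rw [Finset.mul_sum]
            refine Finset.sum_congr rfl fun i _ => ?_
            have : u i = ‖ξ‖⁻¹ * ξ i := rfl
            rw [this]; ring
          rw [this, abs_mul, abs_of_nonneg (inv_nonneg.mpr hξpos.le)]
        simp only [hgdef]
        rw [show (fun r : Fin n => |∑ i, iteratedDeriv (r.1 + 1) γ t i * u i|)
            = fun r : Fin n => ‖ξ‖⁻¹ * |∑ i, iteratedDeriv (r.1 + 1) γ t i * ξ i|
          from funext habs]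
        exact (Finset.comp_sup'_eq_sup'_comp hne (f := fun r : Fin n =>
          |∑ i, iteratedDeriv (r.1 + 1) γ t i * ξ i|) (g := fun x => ‖ξ‖⁻¹ * x)
          (fun x y => mul_max_of_nonneg x y (inv_nonneg.mpr hξpos.le))).symm
      rw [h2] at h1
      calc c * ‖ξ‖ ≤ (‖ξ‖⁻¹ * g (t, ξ)) * ‖ξ‖ := by
            exact mul_le_mul_of_nonneg_right h1 hξpos.le
        _ = g (t, ξ) := by field_simp
  -- the constant
  refine ⟨(1 + c⁻¹) ^ ((n : ℝ)⁻¹), Real.rpow_pos_of_pos (by positivity) _, ?_⟩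
  intro ξ
  set C : ℝ := (1 + c⁻¹) ^ ((n : ℝ)⁻¹) with hCdef
  have hCpos : 0 < C := Real.rpow_pos_of_pos (by positivity) _
  -- pointwise bound for each `t ∈ [-2,2]`
  have hpt : ∀ t ∈ Set.Icc (-2 : ℝ) 2,
      (1 + ‖ξ‖) ^ ((n : ℝ)⁻¹) ≤ C * (1 + ⨆ r : Fin n,
        |∑ i, iteratedDeriv (r.1 + 1) γ t i * ξ i| ^ (((r.1 : ℝ) + 1)⁻¹)) := by
    intro t ht
    set M : ℝ := ⨆ r : Fin n,
      |∑ i, iteratedDeriv (r.1 + 1) γ t i * ξ i| ^ (((r.1 : ℝ) + 1)⁻¹) with hMdef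
    have hMbdd : BddAbove (Set.range fun r : Fin n =>
        |∑ i, iteratedDeriv (r.1 + 1) γ t i * ξ i| ^ (((r.1 : ℝ) + 1)⁻¹)) :=
      Set.Finite.bddAbove (Set.finite_range _)
    have hle : ∀ r : Fin n,
        |∑ i, iteratedDeriv (r.1 + 1) γ t i * ξ i| ^ (((r.1 : ℝ) + 1)⁻¹) ≤ M :=
      fun r => le_ciSup hMbdd r
    have hM0 : 0 ≤ M := by
      refine le_trans ?_ (hle (Classical.arbitrary (Fin n)))
      positivity
    -- each `|D_r| ≤ (1 + M)^n`
    have hDr : ∀ r : Fin n,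
        |∑ i, iteratedDeriv (r.1 + 1) γ t i * ξ i| ≤ (1 + M) ^ n := by
      intro r
      have h1 : |∑ i, iteratedDeriv (r.1 + 1) γ t i * ξ i|
          = (|∑ i, iteratedDeriv (r.1 + 1) γ t i * ξ i| ^ (((r.1 : ℝ) + 1)⁻¹)) ^ (r.1 + 1) := by
        rw [← Real.rpow_natCast (_ ^ (((r.1 : ℝ) + 1)⁻¹)) (r.1 + 1),
          ← Real.rpow_mul (abs_nonneg _)]
        push_cast
        rw [inv_mul_cancel₀ (by positivity), Real.rpow_one]
      rw [h1]
      calc (|∑ i, iteratedDeriv (r.1 + 1) γ t i * ξ i| ^ (((r.1 : ℝ) + 1)⁻¹)) ^ (r.1 + 1)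
          ≤ (1 + M) ^ (r.1 + 1) := by
            apply pow_le_pow_left₀ (by positivity)
            calc |∑ i, iteratedDeriv (r.1 + 1) γ t i * ξ i| ^ (((r.1 : ℝ) + 1)⁻¹)
                ≤ M := hle r
              _ ≤ 1 + M := by linarith
        _ ≤ (1 + M) ^ n := by
            apply pow_le_pow_right₀ (by linarith)
            exact r.2
    have hgle : g (t, ξ) ≤ (1 + M) ^ n :=
      Finset.sup'_le hne _ fun r _ => hDr r
    have hnorm : c * ‖ξ‖ ≤ (1 + M) ^ n := (hkey t ht ξ).trans hgle
    have hxi : ‖ξ‖ ≤ c⁻¹ * (1 + M) ^ n := by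
      have h := mul_le_mul_of_nonneg_left hnorm (inv_nonneg.mpr hc.le)
      rwa [← mul_assoc, inv_mul_cancel₀ hc.ne', one_mul] at h
    have hpow1 : (1 : ℝ) ≤ (1 + M) ^ n := one_le_pow₀ (by linarith)
    have hsum : 1 + ‖ξ‖ ≤ (1 + c⁻¹) * (1 + M) ^ n := by
      have hc' : 0 ≤ c⁻¹ * (1 + M) ^ n := by positivity
      nlinarith
    calc (1 + ‖ξ‖) ^ ((n : ℝ)⁻¹)
        ≤ ((1 + c⁻¹) * (1 + M) ^ n) ^ ((n : ℝ)⁻¹) :=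
          Real.rpow_le_rpow (by positivity) hsum (by positivity)
      _ = C * ((1 + M) ^ n) ^ ((n : ℝ)⁻¹) :=
          Real.mul_rpow (by positivity) (by positivity)
      _ = C * (1 + M) := by
          congr 1
          rw [← Real.rpow_natCast (1 + M) n, ← Real.rpow_mul (by linarith),
            mul_inv_cancel₀ (Nat.cast_ne_zero.mpr (by omega)), Real.rpow_one]
  -- pass to the infimum
  set L : ℝ := (1 + ‖ξ‖) ^ ((n : ℝ)⁻¹) with hLdef
  have hHne : ((fun t => ⨆ r : Fin n,
      |∑ i, iteratedDeriv (r.1 + 1) γ t i * ξ i| ^ (((r.1 : ℝ) + 1)⁻¹)) ''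
      Set.Icc (-2 : ℝ) 2).Nonempty :=
    ⟨_, Set.mem_image_of_mem _ (by norm_num : (0 : ℝ) ∈ Set.Icc (-2 : ℝ) 2)⟩
  have hlb : C⁻¹ * L - 1 ≤ Hfun n γ (Set.Icc (-2 : ℝ) 2) ξ := by
    apply le_csInf hHne
    rintro b ⟨t, ht, rfl⟩
    have h := mul_le_mul_of_nonneg_left (hpt t ht) (inv_nonneg.mpr hCpos.le)
    rw [← mul_assoc, inv_mul_cancel₀ hCpos.ne', one_mul] at h
    linarith
  have h2 : C⁻¹ * L ≤ 1 + Hfun n γ (Set.Icc (-2 : ℝ) 2) ξ := by linarith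
  have h3 := mul_le_mul_of_nonneg_left h2 hCpos.le
  rw [← mul_assoc, mul_inv_cancel₀ hCpos.ne', one_mul] at h3
  exact h3
end

section
/- Let n ≥ 2, let f : ℝ → ℝ^{n-1} be smooth, let γ(t) := (t, f(t)), and assume γ is nondegenerate on [-2,2]. Let e₁(t), …, e_n(t) be the Frenet frame of γ, i.e. the orthonormal system obtained by applying the Gram–Schmidt process to γ^{(1)}(t), …, γ^{(n)}(t). Suppose that the n-th component e_{n,n}(t) of e_n(t) is nonzero for all t ∈ [-2,2]. Define G(t) := e_n(t)/e_{n,n}(t), and let g(t) ∈ ℝ^{n-1} be the vector of the first n−1 components of G(t), so that G(t) = (g(t), 1). Then det[g^{(1)}(t), …, g^{(n-1)}(t)] ≠ 0 for all t ∈ [-2,2]; that is, g parametrises a nondegenerate curve in ℝ^{n-1}. -/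
open MeasureTheory Real Set

open scoped ContDiff RealInnerProductSpace

/-- The Frenet frame of a curve `γ`: the Gram–Schmidt orthonormalization of the derivatives
`γ^{(1)}(t), …, γ^{(n)}(t)`. -/
noncomputable def frenet (n : ℕ) (γ : ℝ → EuclideanSpace ℝ (Fin n)) (t : ℝ) :
    Fin n → EuclideanSpace ℝ (Fin n) :=
  @InnerProductSpace.gramSchmidtNormed ℝ (EuclideanSpace ℝ (Fin n)) _ _ _ (Fin n) _ _
    (inferInstance : WellFoundedLT (Fin n)) (fun i : Fin n => iteratedDeriv (i.1 + 1) γ t)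

section Helpers

variable {F : Type*} [NormedAddCommGroup F] [NormedSpace ℝ F]

lemma aux_contDiffOn_iteratedDeriv {h : ℝ → F} {V : Set ℝ} (hV : IsOpen V)
    (hh : ContDiffOn ℝ ∞ h V) (k : ℕ) : ContDiffOn ℝ ∞ (iteratedDeriv k h) V := by
  induction k with
  | zero => simpa [iteratedDeriv_zero] using hh
  | succ k ih =>
    rw [iteratedDeriv_succ]
    exact ih.deriv_of_isOpen hV (by simp)

lemma aux_differentiableAt_iteratedDeriv {h : ℝ → F} {V : Set ℝ} (hV : IsOpen V)
    (hh : ContDiffOn ℝ ∞ h V) (k : ℕ) {t : ℝ} (ht : t ∈ V) :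
    DifferentiableAt ℝ (iteratedDeriv k h) t := by
  have := (aux_contDiffOn_iteratedDeriv hV hh k).contDiffAt (hV.mem_nhds ht)
  exact this.differentiableAt (by simp)

lemma aux_hasDerivAt_iteratedDeriv {h : ℝ → F} {V : Set ℝ} (hV : IsOpen V)
    (hh : ContDiffOn ℝ ∞ h V) (k : ℕ) {t : ℝ} (ht : t ∈ V) :
    HasDerivAt (iteratedDeriv k h) (iteratedDeriv (k + 1) h t) t := by
  rw [iteratedDeriv_succ]
  exact (aux_differentiableAt_iteratedDeriv hV hh k ht).hasDerivAt

lemma aux_iteratedDeriv_congr {h₁ h₂ : ℝ → F} {V : Set ℝ} (hV : IsOpen V)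
    (he : Set.EqOn h₁ h₂ V) (k : ℕ) {t : ℝ} (ht : t ∈ V) :
    iteratedDeriv k h₁ t = iteratedDeriv k h₂ t := by
  rw [iteratedDeriv_eq_iteratedFDeriv, iteratedDeriv_eq_iteratedFDeriv,
    ← iteratedFDerivWithin_of_isOpen k hV ht, ← iteratedFDerivWithin_of_isOpen k hV ht,
    iteratedFDerivWithin_congr he ht]

lemma aux_iteratedDeriv_const_succ (c : F) (k : ℕ) (t : ℝ) :
    iteratedDeriv (k + 1) (fun _ : ℝ => c) t = 0 := by
  induction k generalizing t with
  | zero => simp [iteratedDeriv_succ]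
  | succ k ih =>
    rw [iteratedDeriv_succ]
    have : iteratedDeriv (k + 1) (fun _ : ℝ => c) = fun _ => (0 : F) := funext fun s => ih s
    rw [this]
    simp

lemma aux_iteratedDeriv_proj {n : ℕ} {h : ℝ → EuclideanSpace ℝ (Fin n)} {V : Set ℝ}
    (hV : IsOpen V) (hh : ContDiffOn ℝ ∞ h V) (k : ℕ) {t : ℝ} (ht : t ∈ V) (j : Fin n) :
    iteratedDeriv k (fun s => h s j) t = iteratedDeriv k h t j := by
  have key : iteratedFDeriv ℝ k (⇑(EuclideanSpace.proj (𝕜 := ℝ) j) ∘ h) t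
      = (EuclideanSpace.proj (𝕜 := ℝ) j).compContinuousMultilinearMap
          (iteratedFDeriv ℝ k h t) := by
    rw [← iteratedFDerivWithin_of_isOpen k hV ht, ← iteratedFDerivWithin_of_isOpen k hV ht]
    exact (EuclideanSpace.proj (𝕜 := ℝ) j).iteratedFDerivWithin_comp_left (hh t ht)
      hV.uniqueDiffOn ht (by exact_mod_cast le_top)
  have : (fun s => h s j) = ⇑(EuclideanSpace.proj (𝕜 := ℝ) j) ∘ h := rfl
  rw [this, iteratedDeriv_eq_iteratedFDeriv, key, iteratedDeriv_eq_iteratedFDeriv]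
  rfl

noncomputable def GS (n : ℕ) (f : Fin n → EuclideanSpace ℝ (Fin n)) :
    Fin n → EuclideanSpace ℝ (Fin n) :=
  @InnerProductSpace.gramSchmidt ℝ (EuclideanSpace ℝ (Fin n)) _ _ _ (Fin n) _ _
    (inferInstance : WellFoundedLT (Fin n)) f

noncomputable def GSN (n : ℕ) (f : Fin n → EuclideanSpace ℝ (Fin n)) :
    Fin n → EuclideanSpace ℝ (Fin n) :=
  @InnerProductSpace.gramSchmidtNormed ℝ (EuclideanSpace ℝ (Fin n)) _ _ _ (Fin n) _ _
    (inferInstance : WellFoundedLT (Fin n)) f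

variable {n : ℕ}

lemma GSN_eq (f : Fin n → EuclideanSpace ℝ (Fin n)) (i : Fin n) :
    GSN n f i = (‖GS n f i‖ : ℝ)⁻¹ • GS n f i := rfl

lemma GS_def'' (f : Fin n → EuclideanSpace ℝ (Fin n)) (i : Fin n) :
    f i = GS n f i + ∑ j ∈ Finset.Iio i, (⟪GS n f j, f i⟫ / (‖GS n f j‖ : ℝ) ^ 2) • GS n f j :=
  @InnerProductSpace.gramSchmidt_def'' ℝ (EuclideanSpace ℝ (Fin n)) _ _ _ (Fin n) _ _
    (inferInstance : WellFoundedLT (Fin n)) f i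

lemma GS_ne_zero {f : Fin n → EuclideanSpace ℝ (Fin n)} (hli : LinearIndependent ℝ f)
    (i : Fin n) : GS n f i ≠ 0 :=
  @InnerProductSpace.gramSchmidt_ne_zero ℝ (EuclideanSpace ℝ (Fin n)) _ _ _ (Fin n) _ _
    (inferInstance : WellFoundedLT (Fin n)) f i hli

lemma GS_orthogonal (f : Fin n → EuclideanSpace ℝ (Fin n)) {a b : Fin n} (h : a ≠ b) :
    ⟪GS n f a, GS n f b⟫ = 0 :=
  @InnerProductSpace.gramSchmidt_orthogonal ℝ (EuclideanSpace ℝ (Fin n)) _ _ _ (Fin n) _ _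
    (inferInstance : WellFoundedLT (Fin n)) f a b h

lemma GS_mem_span (f : Fin n → EuclideanSpace ℝ (Fin n)) {i j : Fin n} (hij : i ≤ j) :
    f i ∈ Submodule.span ℝ (GS n f '' Set.Iic j) :=
  @InnerProductSpace.mem_span_gramSchmidt ℝ (EuclideanSpace ℝ (Fin n)) _ _ _ (Fin n) _ _
    (inferInstance : WellFoundedLT (Fin n)) f i j hij

lemma aux_li {N : ℕ} (w : Fin N → EuclideanSpace ℝ (Fin N))
    (h : (Matrix.of fun i r : Fin N => w r i).det ≠ 0) : LinearIndependent ℝ w := by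
  set C : Matrix (Fin N) (Fin N) ℝ := Matrix.of fun r i : Fin N => w r i with hC
  have hdet : C.det ≠ 0 := by
    have : C.det = (Matrix.of fun i r : Fin N => w r i).det := by
      rw [← Matrix.det_transpose]; rfl
    rw [this]; exact h
  have h1 : LinearIndependent ℝ (fun r : Fin N => C r) :=
    Matrix.linearIndependent_rows_iff_isUnit.mpr
      ((Matrix.isUnit_iff_isUnit_det _).mpr hdet.isUnit)
  have h2 := h1.map' (EuclideanSpace.equiv (Fin N) ℝ).symm.toLinearEquiv.toLinearMap
    (LinearEquiv.ker _)
  exact h2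

lemma aux_inner_GSN_zero {N : ℕ} (w : Fin N → EuclideanSpace ℝ (Fin N))
    {j r : Fin N} (hrj : r < j) : ⟪GSN N w j, w r⟫ = 0 := by
  have hmem : w r ∈ Submodule.span ℝ (GS N w '' Set.Iic r) := GS_mem_span w le_rfl
  have hgs : ⟪GS N w j, w r⟫ = 0 := by
    refine Submodule.span_induction (fun x hx => ?_) (inner_zero_right _)
      (fun x y _ _ hx hy => by rw [inner_add_right, hx, hy, add_zero])
      (fun c x _ hx => by rw [real_inner_smul_right, hx, mul_zero]) hmem
    obtain ⟨a, ha, rfl⟩ := hx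
    exact GS_orthogonal w (lt_of_le_of_lt ha hrj).ne'
  rw [GSN_eq, real_inner_smul_left, hgs, mul_zero]

lemma aux_inner_GSN_self {N : ℕ} {w : Fin N → EuclideanSpace ℝ (Fin N)}
    (hli : LinearIndependent ℝ w) (j : Fin N) : ⟪GSN N w j, w j⟫ ≠ 0 := by
  have hexp := GS_def'' w j
  have hin : ⟪GS N w j, w j⟫ = ‖GS N w j‖ ^ 2 := by
    rw [hexp, inner_add_right, real_inner_self_eq_norm_sq]
    rw [inner_sum]
    simp only [real_inner_smul_right]
    rw [Finset.sum_eq_zero, add_zero]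
    intro x hx
    rw [GS_orthogonal w (Finset.mem_Iio.mp hx).ne', mul_zero]
  rw [GSN_eq, real_inner_smul_left, hin]
  have hne : GS N w j ≠ 0 := GS_ne_zero hli j
  have : ‖GS N w j‖ ≠ 0 := norm_ne_zero_iff.mpr hne
  field_simp
  exact this

lemma aux_gramSchmidt_contDiffAt {v : Fin n → ℝ → EuclideanSpace ℝ (Fin n)} {t₀ : ℝ}
    (hv : ∀ i, ContDiffAt ℝ ∞ (v i) t₀)
    (hli : LinearIndependent ℝ (fun i => v i t₀)) (i : Fin n) :
    ContDiffAt ℝ ∞ (fun t => GS n (fun j => v j t) i) t₀ := by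
  suffices H : ∀ N : ℕ, ∀ i : Fin n, i.1 < N →
      ContDiffAt ℝ ∞ (fun t => GS n (fun j => v j t) i) t₀ by
    exact H (i.1 + 1) i (Nat.lt_succ_self _)
  intro N
  induction N with
  | zero => exact fun i hi => absurd hi (Nat.not_lt_zero _)
  | succ N IH' =>
  intro i hiN
  have IH : ∀ j : Fin n, j < i → ContDiffAt ℝ ∞ (fun t => GS n (fun j' => v j' t) j) t₀ :=
    fun j hj => IH' j (by omega)
  have hformula : (fun t => GS n (fun j => v j t) i)
      = fun t => v i t - ∑ j ∈ Finset.Iio i,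
          (⟪GS n (fun j' => v j' t) j, v i t⟫ /
            (‖GS n (fun j' => v j' t) j‖ : ℝ) ^ 2) • GS n (fun j' => v j' t) j := by
    funext t
    have := GS_def'' (fun j => v j t) i
    rw [eq_sub_iff_add_eq]; exact this.symm
  rw [hformula]
  refine (hv i).sub (ContDiffAt.sum fun j hj => ?_)
  have hjlt : j < i := Finset.mem_Iio.mp hj
  have hgs : ContDiffAt ℝ ∞ (fun t => GS n (fun j' => v j' t) j) t₀ := IH j hjlt
  have hne : GS n (fun j' => v j' t₀) j ≠ 0 := GS_ne_zero hli j
  have hnorm : ContDiffAt ℝ ∞ (fun t => (‖GS n (fun j' => v j' t) j‖ : ℝ) ^ 2) t₀ :=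
    (hgs.norm ℝ hne).pow 2
  have hden : (‖GS n (fun j' => v j' t₀) j‖ : ℝ) ^ 2 ≠ 0 :=
    pow_ne_zero 2 (norm_ne_zero_iff.mpr hne)
  exact ((hgs.inner ℝ (hv i)).div hnorm hden).smul hgs

lemma aux_gramSchmidtNormed_contDiffAt {v : Fin n → ℝ → EuclideanSpace ℝ (Fin n)} {t₀ : ℝ}
    (hv : ∀ i, ContDiffAt ℝ ∞ (v i) t₀)
    (hli : LinearIndependent ℝ (fun i => v i t₀)) (i : Fin n) :
    ContDiffAt ℝ ∞ (fun t => GSN n (fun j => v j t) i) t₀ := by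
  have hgs := aux_gramSchmidt_contDiffAt hv hli i
  have hne : GS n (fun j => v j t₀) i ≠ 0 := GS_ne_zero hli i
  simp only [GSN_eq]
  exact ((hgs.norm ℝ hne).inv (by simpa using hne)).smul hgs

end Helpers

/-- If `γ(t) = (t, f(t))` is nondegenerate on `[-2,2]` and the last component of the last Frenet
vector never vanishes, then `g`, given by the first `n-1` components of
`G(t) = e_n(t)/e_{n,n}(t)`, parametrises a nondegenerate curve in `ℝ^{n-1}`. -/
theorem dual_curve_nondegenerate
    {m : ℕ} (hm : 1 ≤ m) (f : ℝ → EuclideanSpace ℝ (Fin m)) (hf : ContDiff ℝ (⊤ : ℕ∞) f)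
    (γ : ℝ → EuclideanSpace ℝ (Fin (m + 1)))
    (hγ0 : ∀ t, γ t 0 = t) (hγi : ∀ t, ∀ i : Fin m, γ t i.succ = f t i)
    (hnondeg : ∀ t ∈ Set.Icc (-2 : ℝ) 2,
      (Matrix.of fun (i r : Fin (m + 1)) => iteratedDeriv (r.1 + 1) γ t i).det ≠ 0)
    (hlast : ∀ t ∈ Set.Icc (-2 : ℝ) 2,
      frenet (m + 1) γ t (Fin.last m) (Fin.last m) ≠ 0)
    (G : ℝ → EuclideanSpace ℝ (Fin (m + 1)))
    (hG : ∀ t, G t = (frenet (m + 1) γ t (Fin.last m) (Fin.last m))⁻¹ •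
      frenet (m + 1) γ t (Fin.last m))
    (g : ℝ → EuclideanSpace ℝ (Fin m))
    (hg : ∀ t, ∀ i : Fin m, g t i = G t i.castSucc) :
    ∀ t ∈ Set.Icc (-2 : ℝ) 2,
      (Matrix.of fun (i r : Fin m) => iteratedDeriv (r.1 + 1) g t i).det ≠ 0 := by
  have hγsm : ContDiff ℝ ∞ γ := by
    rw [contDiff_euclidean]
    intro i
    refine Fin.cases ?_ ?_ i
    · have h0 : (fun t => γ t 0) = fun t : ℝ => t := funext hγ0
      rw [h0]; exact contDiff_id
    · intro j
      have h1 : (fun t => γ t j.succ) = fun t => f t j := funext fun t => hγi t j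
      rw [h1]; exact contDiff_euclidean.mp (hf.of_le (by simp)) j
  set v : Fin (m + 1) → ℝ → EuclideanSpace ℝ (Fin (m + 1)) :=
      fun i t => iteratedDeriv (i.1 + 1) γ t with hvdef
  have hvsm : ∀ i, ContDiff ℝ ∞ (v i) := by
    intro i
    rw [← contDiffOn_univ]
    exact aux_contDiffOn_iteratedDeriv isOpen_univ hγsm.contDiffOn (i.1 + 1)
  set U : Set ℝ := {t | (Matrix.of fun i r : Fin (m + 1) =>
      iteratedDeriv (r.1 + 1) γ t i).det ≠ 0
      ∧ frenet (m + 1) γ t (Fin.last m) (Fin.last m) ≠ 0} with hUdef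
  have hUmem : ∀ {t : ℝ}, t ∈ U ↔ ((Matrix.of fun i r : Fin (m + 1) =>
      iteratedDeriv (r.1 + 1) γ t i).det ≠ 0
      ∧ frenet (m + 1) γ t (Fin.last m) (Fin.last m) ≠ 0) := fun {t} => Iff.rfl
  have hli : ∀ t ∈ U, LinearIndependent ℝ (fun i => v i t) :=
    fun t ht => aux_li _ (hUmem.mp ht).1
  have hfren_eq : ∀ (s : ℝ) (i : Fin (m + 1)),
      frenet (m + 1) γ s i = GSN (m + 1) (fun j => v j s) i := fun _ _ => rfl
  have hfrensm : ∀ t ∈ U, ∀ i, ContDiffAt ℝ ∞ (fun s => frenet (m + 1) γ s i) t := by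
    intro t ht i
    have heq : (fun s => frenet (m + 1) γ s i) = fun s => GSN (m + 1) (fun j => v j s) i := rfl
    rw [heq]
    exact aux_gramSchmidtNormed_contDiffAt (fun j => (hvsm j).contDiffAt) (hli t ht) i
  have hU : IsOpen U := by
    rw [isOpen_iff_eventually]
    intro t ht
    obtain ⟨h1, h2⟩ := hUmem.mp ht
    have hdetc : ContinuousAt (fun s => (Matrix.of fun i r : Fin (m + 1) =>
        iteratedDeriv (r.1 + 1) γ s i).det) t := by
      refine Continuous.continuousAt (Continuous.matrix_det (continuous_matrix ?_))
      intro i r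
      exact (EuclideanSpace.proj (𝕜 := ℝ) i).continuous.comp (hvsm r).continuous
    have he : ContinuousAt (fun s => frenet (m + 1) γ s (Fin.last m) (Fin.last m)) t := by
      have hc := (hfrensm t ht (Fin.last m)).continuousAt
      exact (EuclideanSpace.proj (𝕜 := ℝ) (Fin.last m)).continuous.continuousAt.comp hc
    filter_upwards [hdetc.eventually_ne h1, he.eventually_ne h2] with s hs1 hs2
    exact hUmem.mpr ⟨hs1, hs2⟩
  have hIcc : Set.Icc (-2 : ℝ) 2 ⊆ U := fun t ht => hUmem.mpr ⟨hnondeg t ht, hlast t ht⟩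
  have hGsm : ContDiffOn ℝ ∞ G U := by
    intro t ht
    have hE : ContDiffAt ℝ ∞ (fun s => frenet (m + 1) γ s (Fin.last m)) t :=
      hfrensm t ht (Fin.last m)
    have hEll : ContDiffAt ℝ ∞ (fun s => frenet (m + 1) γ s (Fin.last m) (Fin.last m)) t :=
      (EuclideanSpace.proj (𝕜 := ℝ) (Fin.last m)).contDiff.contDiffAt.comp t hE
    have hGe : G = fun s => (frenet (m + 1) γ s (Fin.last m) (Fin.last m))⁻¹ •
        frenet (m + 1) γ s (Fin.last m) := funext hG
    rw [hGe]
    exact ((hEll.inv (hUmem.mp ht).2).smul hE).contDiffWithinAt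
  have hgsm : ContDiffOn ℝ ∞ g U := by
    rw [contDiffOn_euclidean]
    intro i
    have heq : (fun t => g t i) = fun t => G t i.castSucc := funext fun t => hg t i
    rw [heq]
    exact (EuclideanSpace.proj (𝕜 := ℝ) i.castSucc).contDiff.comp_contDiffOn hGsm
  have horth : ∀ t ∈ U, ∀ r : ℕ, 1 ≤ r → r ≤ m → ⟪G t, iteratedDeriv r γ t⟫ = 0 := by
    intro t ht r h1 h2
    have hj : r - 1 < m + 1 := by omega
    set j : Fin (m + 1) := ⟨r - 1, hj⟩ with hjdef
    have hvj : iteratedDeriv r γ t = v j t := by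
      have : r = (j : ℕ) + 1 := by
        have : (j : ℕ) = r - 1 := rfl
        omega
      rw [this]
    have hjlast : j < Fin.last m := by
      rw [Fin.lt_def]
      show r - 1 < m
      omega
    have h0 : ⟪GSN (m + 1) (fun j' => v j' t) (Fin.last m), v j t⟫ = 0 :=
      aux_inner_GSN_zero _ hjlast
    rw [hvj, hG t, real_inner_smul_left, hfren_eq t (Fin.last m), h0, mul_zero]
  have hlastinner : ∀ t ∈ U, ⟪G t, iteratedDeriv (m + 1) γ t⟫ ≠ 0 := by
    intro t ht
    have hvlast : iteratedDeriv (m + 1) γ t = v (Fin.last m) t := rfl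
    have h0 : ⟪GSN (m + 1) (fun j' => v j' t) (Fin.last m), v (Fin.last m) t⟫ ≠ 0 :=
      aux_inner_GSN_self (hli t ht) (Fin.last m)
    rw [hvlast, hG t, real_inner_smul_left, hfren_eq t (Fin.last m)]
    exact mul_ne_zero (inv_ne_zero (hUmem.mp ht).2) h0
  have hGlast1 : ∀ t ∈ U, G t (Fin.last m) = 1 := by
    intro t ht
    rw [hG t]
    have heq : ((frenet (m + 1) γ t (Fin.last m) (Fin.last m))⁻¹ •
        frenet (m + 1) γ t (Fin.last m)) (Fin.last m)
        = (frenet (m + 1) γ t (Fin.last m) (Fin.last m))⁻¹ *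
          frenet (m + 1) γ t (Fin.last m) (Fin.last m) := rfl
    rw [heq, inv_mul_cancel₀ (hUmem.mp ht).2]
  have key : ∀ k r : ℕ, 1 ≤ r → k + r ≤ m + 1 → ∀ t ∈ U,
      ⟪iteratedDeriv k G t, iteratedDeriv r γ t⟫
        = (-1 : ℝ) ^ k * ⟪G t, iteratedDeriv (k + r) γ t⟫ := by
    intro k
    induction k with
    | zero => intro r h1 h2 t ht; simp [iteratedDeriv_zero]
    | succ k IH =>
      intro r hr1 hrk t ht
      have h0 : ∀ s ∈ U, ⟪iteratedDeriv k G s, iteratedDeriv r γ s⟫ = 0 := by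
        intro s hs
        rw [IH r hr1 (by omega) s hs, horth s hs (k + r) (by omega) (by omega), mul_zero]
      have hev : (fun s => ⟪iteratedDeriv k G s, iteratedDeriv r γ s⟫)
          =ᶠ[nhds t] fun _ => (0 : ℝ) := by
        filter_upwards [hU.mem_nhds ht] with s hs using h0 s hs
      have hd0 : deriv (fun s => ⟪iteratedDeriv k G s, iteratedDeriv r γ s⟫) t = 0 := by
        rw [hev.deriv_eq]; simp
      have hder : HasDerivAt (fun s => ⟪iteratedDeriv k G s, iteratedDeriv r γ s⟫)
          (⟪iteratedDeriv k G t, iteratedDeriv (r + 1) γ t⟫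
            + ⟪iteratedDeriv (k + 1) G t, iteratedDeriv r γ t⟫) t :=
        (aux_hasDerivAt_iteratedDeriv hU hGsm k ht).inner ℝ
          (aux_hasDerivAt_iteratedDeriv isOpen_univ hγsm.contDiffOn r (Set.mem_univ t))
      have hsum : ⟪iteratedDeriv k G t, iteratedDeriv (r + 1) γ t⟫
          + ⟪iteratedDeriv (k + 1) G t, iteratedDeriv r γ t⟫ = 0 := by
        rw [← hder.deriv]; exact hd0
      have hIH1 : ⟪iteratedDeriv k G t, iteratedDeriv (r + 1) γ t⟫
          = (-1 : ℝ) ^ k * ⟪G t, iteratedDeriv (k + (r + 1)) γ t⟫ :=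
        IH (r + 1) (by omega) (by omega) t ht
      have hidx : k + (r + 1) = (k + 1) + r := by omega
      rw [hidx] at hIH1
      have hfin : ⟪iteratedDeriv (k + 1) G t, iteratedDeriv r γ t⟫
          = -((-1 : ℝ) ^ k * ⟪G t, iteratedDeriv ((k + 1) + r) γ t⟫) := by
        rw [← hIH1]; linarith [hsum]
      rw [hfin, pow_succ]
      ring
  intro t₀ ht₀
  have htU : t₀ ∈ U := hIcc ht₀
  set A : Matrix (Fin m) (Fin m) ℝ :=
    Matrix.of fun i r : Fin m => iteratedDeriv (r.1 + 1) g t₀ i with hA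
  set B : Matrix (Fin m) (Fin m) ℝ :=
    Matrix.of fun j r : Fin m => iteratedDeriv (r.1 + 1) γ t₀ j.castSucc with hB
  set M : Matrix (Fin m) (Fin m) ℝ :=
    Matrix.of fun k r : Fin m =>
      ⟪iteratedDeriv (k.1 + 1) G t₀, iteratedDeriv (r.1 + 1) γ t₀⟫ with hM
  have hlastzero : ∀ k : ℕ, iteratedDeriv (k + 1) G t₀ (Fin.last m) = 0 := by
    intro k
    rw [← aux_iteratedDeriv_proj hU hGsm (k + 1) htU (Fin.last m)]
    have heq : Set.EqOn (fun s => G s (Fin.last m)) (fun _ : ℝ => (1 : ℝ)) U :=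
      fun s hs => hGlast1 s hs
    rw [aux_iteratedDeriv_congr hU heq (k + 1) htU]
    exact aux_iteratedDeriv_const_succ 1 k t₀
  have hAG : ∀ (k : ℕ) (j : Fin m),
      iteratedDeriv (k + 1) G t₀ j.castSucc = iteratedDeriv (k + 1) g t₀ j := by
    intro k j
    rw [← aux_iteratedDeriv_proj hU hGsm (k + 1) htU j.castSucc,
      ← aux_iteratedDeriv_proj hU hgsm (k + 1) htU j]
    congr 1
    funext s
    exact (hg s j).symm
  have hMeq : M = A.transpose * B := by
    ext k r
    rw [Matrix.mul_apply]
    show ⟪iteratedDeriv (k.1 + 1) G t₀, iteratedDeriv (r.1 + 1) γ t₀⟫ = _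
    rw [PiLp.inner_apply]
    simp only [RCLike.inner_apply, conj_trivial]
    rw [Fin.sum_univ_castSucc, hlastzero k.1, mul_zero, add_zero]
    refine Finset.sum_congr rfl fun j _ => ?_
    rw [hAG k.1 j]
    exact mul_comm _ _
  have hMzero : ∀ k r : Fin m, k.1 + r.1 + 2 ≤ m → M k r = 0 := by
    intro k r h
    show ⟪iteratedDeriv (k.1 + 1) G t₀, iteratedDeriv (r.1 + 1) γ t₀⟫ = 0
    rw [key (k.1 + 1) (r.1 + 1) (by omega) (by omega) t₀ htU,
      horth t₀ htU ((k.1 + 1) + (r.1 + 1)) (by omega) (by omega), mul_zero]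
  have hMdiag : ∀ k r : Fin m, k.1 + r.1 + 2 = m + 1 → M k r ≠ 0 := by
    intro k r h
    show ⟪iteratedDeriv (k.1 + 1) G t₀, iteratedDeriv (r.1 + 1) γ t₀⟫ ≠ 0
    rw [key (k.1 + 1) (r.1 + 1) (by omega) (by omega) t₀ htU]
    have hidx : (k.1 + 1) + (r.1 + 1) = m + 1 := by omega
    rw [hidx]
    exact mul_ne_zero (pow_ne_zero _ (by norm_num)) (hlastinner t₀ htU)
  have hMdet : M.det ≠ 0 := by
    have htri : (M.submatrix id ⇑(Fin.revPerm : Equiv.Perm (Fin m))).BlockTriangular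
        OrderDual.toDual := by
      intro i j hij
      have hij' : i < j := hij
      rw [Matrix.submatrix_apply]
      refine hMzero i _ ?_
      have : ((Fin.revPerm : Equiv.Perm (Fin m)) j : ℕ) = m - (j.1 + 1) := Fin.val_rev j
      have hj : j.1 < m := j.isLt
      omega
    have hdiagne : ∀ i : Fin m, (M.submatrix id ⇑(Fin.revPerm : Equiv.Perm (Fin m))) i i ≠ 0 := by
      intro i
      rw [Matrix.submatrix_apply]
      refine hMdiag i _ ?_
      have : ((Fin.revPerm : Equiv.Perm (Fin m)) i : ℕ) = m - (i.1 + 1) := Fin.val_rev i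
      have hi : i.1 < m := i.isLt
      omega
    have hNdet : (M.submatrix id ⇑(Fin.revPerm : Equiv.Perm (Fin m))).det ≠ 0 := by
      rw [Matrix.det_of_lowerTriangular _ htri]
      exact Finset.prod_ne_zero_iff.mpr fun i _ => hdiagne i
    intro hc
    apply hNdet
    rw [Matrix.det_permute', hc, mul_zero]
  intro hc
  apply hMdet
  rw [hMeq, Matrix.det_mul, Matrix.det_transpose, hc, zero_mul]
end

section
/- Let n ≥ 2, let G : ℝ → ℝⁿ be smooth, and let σ ≥ 1. For T = (T₀, …, T_{n-2}) ∈ [1,∞)^{n-1} and R ≥ 1 with R ≥ T_r ≥ σ for all 0 ≤ r ≤ n−2, define 𝓕(T) := { Σ_{r=0}^{n-2} s_r G^{(r)}(t) : t ∈ [-2,2], |s_r| ≤ T_r for all r }, and let 𝓕_σ(T) be its σ-neighbourhood in ℝⁿ. Then there exists a constant C > 0, depending only on n, σ, and on sup_{t∈[-2,2]} Σ_{r=0}^{n-1} |G^{(r)}(t)|, such that the n-dimensional Lebesgue measure of 𝓕_σ(T) satisfies Vol_n(𝓕_σ(T)) ≤ C · R · Π_{r=0}^{n-2} T_r. -/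
set_option maxHeartbeats 1000000

open MeasureTheory Real Set

/-- The set `𝓕(T) = { Σ_{r=0}^{n-2} s_r G^{(r)}(t) : t ∈ [-2,2], |s_r| ≤ T_r }`. -/
def Fset (n : ℕ) (G : ℝ → EuclideanSpace ℝ (Fin n)) (T : Fin (n - 1) → ℝ) :
    Set (EuclideanSpace ℝ (Fin n)) :=
  {x | ∃ t ∈ Set.Icc (-2 : ℝ) 2, ∃ s : Fin (n - 1) → ℝ,
    (∀ r, |s r| ≤ T r) ∧ x = ∑ r : Fin (n - 1), s r • iteratedDeriv r.1 G t}

/-- Volume bound: the `σ`-neighbourhood of `𝓕(T)` has volume at most `C R Π T_r`. -/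
theorem volume_bound_Fset
    {n : ℕ} (hn : 2 ≤ n) (G : ℝ → EuclideanSpace ℝ (Fin n)) (hG : ContDiff ℝ (⊤ : ℕ∞) G)
    (σ : ℝ) (hσ : 1 ≤ σ) :
    ∃ C > 0, ∀ (T : Fin (n - 1) → ℝ) (R : ℝ), 1 ≤ R →
      (∀ r, σ ≤ T r ∧ T r ≤ R) →
      volume (Metric.thickening σ (Fset n G T)) ≤
        ENNReal.ofReal (C * R * ∏ r : Fin (n - 1), T r) := by
  classical
  have hσ0 : (0:ℝ) < σ := by linarith
  have hn0 : (0:ℝ) < (n:ℝ) := by positivity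
  have hnR : (2:ℝ) ≤ (n:ℝ) := by exact_mod_cast hn
  -- smoothness of the iterated derivatives
  have hsmooth : ∀ r : ℕ, ContDiff ℝ (⊤ : ℕ∞) (iteratedDeriv r G) := by
    intro r
    rw [iteratedDeriv_eq_iterate]
    exact ContDiff.iterate_deriv r (hG.of_le (by simp))
  -- a uniform bound on all relevant derivatives on [-2,2]
  obtain ⟨M, hM1, hM⟩ : ∃ M : ℝ, 1 ≤ M ∧
      ∀ r < n, ∀ t ∈ Icc (-2:ℝ) 2, ‖iteratedDeriv r G t‖ ≤ M := by
    have hc : Continuous fun t => ∑ r ∈ Finset.range n, ‖iteratedDeriv r G t‖ :=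
      continuous_finset_sum _ fun r _ => ((hsmooth r).continuous).norm
    obtain ⟨x0, hx0, hB⟩ := (isCompact_Icc (a := (-2:ℝ)) (b := 2)).exists_isMaxOn
      ⟨-2, by norm_num⟩ hc.continuousOn
    refine ⟨max 1 (∑ r ∈ Finset.range n, ‖iteratedDeriv r G x0‖), le_max_left _ _, ?_⟩
    intro r hr t ht
    refine le_trans ?_ (le_trans (hB ht) (le_max_right _ _))
    exact Finset.single_le_sum (f := fun i => ‖iteratedDeriv i G t‖)
      (fun i _ => norm_nonneg _) (Finset.mem_range.mpr hr)
  have hM0 : (0:ℝ) < M := lt_of_lt_of_le one_pos hM1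
  -- Lipschitz bound for derivatives of order ≤ n-2
  have hlip : ∀ r : ℕ, r + 1 < n → ∀ t1 ∈ Icc (-2:ℝ) 2, ∀ t2 ∈ Icc (-2:ℝ) 2,
      ‖iteratedDeriv r G t1 - iteratedDeriv r G t2‖ ≤ M * |t1 - t2| := by
    intro r hr t1 ht1 t2 ht2
    have hder : ∀ x ∈ Icc (-2:ℝ) 2, HasDerivWithinAt (iteratedDeriv r G)
        (iteratedDeriv (r+1) G x) (Icc (-2:ℝ) 2) x := by
      intro x hx
      have hd : DifferentiableAt ℝ (iteratedDeriv r G) x :=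
        ((hsmooth r).differentiable (by simp)) x
      have h2 := hd.hasDerivAt
      rw [iteratedDeriv_succ]
      exact h2.hasDerivWithinAt
    have := (convex_Icc (-2:ℝ) 2).norm_image_sub_le_of_norm_hasDerivWithin_le hder
      (fun x hx => hM (r+1) hr x hx) ht2 ht1
    simpa [Real.norm_eq_abs] using this
  -- the volume of a ball of radius 3σ
  set v := (volume (Metric.ball (0 : EuclideanSpace ℝ (Fin n)) (3*σ))).toReal with hv
  have hv0 : 0 ≤ v := ENNReal.toReal_nonneg
  have hVne : volume (Metric.ball (0 : EuclideanSpace ℝ (Fin n)) (3*σ)) ≠ ⊤ :=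
    measure_ball_lt_top.ne
  refine ⟨(4*M^2*n/σ + 2) * (2*M*n/σ + 3)^(n-1) * (v+1), by positivity, ?_⟩
  intro T R hR hT
  have hR0 : (0:ℝ) < R := by linarith
  have hT1 : ∀ r, (1:ℝ) ≤ T r := fun r => le_trans hσ (hT r).1
  set δt := σ/(M^2*n*R) with hδt
  set δs := σ/(M*n) with hδs
  have hδt0 : 0 < δt := by rw [hδt]; positivity
  have hδs0 : 0 < δs := by rw [hδs]; positivity
  set K := ⌊4/δt⌋₊ with hK
  set J : Fin (n-1) → ℕ := fun r => ⌊T r/δs⌋₊ + 1 with hJ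
  set S := (Finset.range (K+1)) ×ˢ
    (Fintype.piFinset fun r : Fin (n-1) => Finset.Icc (-(J r:ℤ)) (J r)) with hS
  set Φ : ℕ × (Fin (n-1) → ℤ) → EuclideanSpace ℝ (Fin n) :=
    fun p => ∑ r : Fin (n-1), ((p.2 r : ℝ) * δs) • iteratedDeriv r.1 G (-2 + p.1 * δt) with hΦ
  -- the covering
  have hcover : Metric.thickening σ (Fset n G T) ⊆ ⋃ p ∈ S, Metric.ball (Φ p) (3*σ) := by
    intro x hx
    rw [Metric.mem_thickening_iff] at hx
    obtain ⟨y, ⟨t, ht, s, hs, hy⟩, hxy⟩ := hx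
    set i := ⌊(t+2)/δt⌋₊ with hi
    set j : Fin (n-1) → ℤ := fun r => ⌊s r/δs⌋ with hj
    have ht2 : 0 ≤ t + 2 := by linarith [ht.1]
    have hiK : i ≤ K :=
      Nat.floor_mono ((div_le_div_iff_of_pos_right hδt0).mpr (by linarith [ht.2]))
    have hfl1 : (i:ℝ) ≤ (t+2)/δt := Nat.floor_le (div_nonneg ht2 hδt0.le)
    have hfl2 : (t+2)/δt < (i:ℝ) + 1 := Nat.lt_floor_add_one _
    have hidt : (i:ℝ) * δt ≤ t + 2 := by
      rw [← le_div_iff₀ hδt0]; exact hfl1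
    have hidt2 : t + 2 < ((i:ℝ) + 1) * δt := by
      rw [← div_lt_iff₀ hδt0]; exact hfl2
    set t' := -2 + (i:ℝ) * δt with ht'
    have ht'mem : t' ∈ Icc (-2:ℝ) 2 := by
      constructor
      · rw [ht']; nlinarith [mul_nonneg (Nat.cast_nonneg i : (0:ℝ) ≤ i) hδt0.le]
      · rw [ht']; linarith [ht.2]
    have htt' : |t - t'| ≤ δt := by
      rw [abs_le]; constructor
      · rw [ht']; nlinarith
      · rw [ht']; nlinarith
    -- bounds on j r
    have hjfl1 : ∀ r, ((j r : ℝ)) ≤ s r / δs := fun r => Int.floor_le _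
    have hjfl2 : ∀ r, s r / δs < (j r : ℝ) + 1 := fun r => Int.lt_floor_add_one _
    have hsjs : ∀ r, |s r - (j r : ℝ) * δs| ≤ δs := by
      intro r
      have hlo : (j r : ℝ) * δs ≤ s r := by
        have := hjfl1 r
        rw [le_div_iff₀ hδs0] at this
        linarith
      have hhi : s r < ((j r : ℝ) + 1) * δs := by
        have := hjfl2 r
        rw [div_lt_iff₀ hδs0] at this
        linarith
      have hexp : ((j r : ℝ) + 1) * δs = (j r : ℝ) * δs + δs := by ring
      rw [abs_le]
      constructor <;> linarith
    have hmem : (i, j) ∈ S := by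
      rw [hS, Finset.mem_product]
      constructor
      · exact Finset.mem_range.mpr (Nat.lt_succ_of_le hiK)
      · rw [Fintype.mem_piFinset]
        intro r
        rw [Finset.mem_Icc]
        have hsr := abs_le.mp (hs r)
        have h1 : -(T r / δs) ≤ s r / δs := by
          have h0 := (div_le_div_iff_of_pos_right hδs0).mpr hsr.1
          rwa [neg_div] at h0
        have h2 : T r / δs < ((J r : ℕ) : ℝ) := by
          simp only [hJ]
          push_cast
          linarith [Nat.lt_floor_add_one (T r / δs)]
        constructor
        · refine Int.le_floor.mpr ?_
          push_cast
          linarith [Nat.lt_floor_add_one (T r / δs)]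
        · have h3 : (j r : ℝ) ≤ T r / δs :=
            le_trans (hjfl1 r) ((div_le_div_iff_of_pos_right hδs0).mpr hsr.2)
          exact_mod_cast (h3.trans_lt h2).le
    -- distance estimate
    have hyΦ : ‖y - Φ (i, j)‖ ≤ 2*σ := by
      have hterm : ∀ r : Fin (n-1),
          ‖s r • iteratedDeriv r.1 G t - ((j r : ℝ) * δs) • iteratedDeriv r.1 G t'‖
            ≤ R * (M * δt) + δs * M := by
        intro r
        have hsplit : s r • iteratedDeriv r.1 G t - ((j r : ℝ) * δs) • iteratedDeriv r.1 G t'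
            = s r • (iteratedDeriv r.1 G t - iteratedDeriv r.1 G t')
              + (s r - (j r : ℝ) * δs) • iteratedDeriv r.1 G t' := by
          rw [smul_sub, sub_smul]; abel
        rw [hsplit]
        refine le_trans (norm_add_le _ _) ?_
        rw [norm_smul, norm_smul, Real.norm_eq_abs, Real.norm_eq_abs]
        have hrn : r.1 + 1 < n := by omega
        have h1 : ‖iteratedDeriv r.1 G t - iteratedDeriv r.1 G t'‖ ≤ M * δt :=
          le_trans (hlip r.1 hrn t ht t' ht'mem) (by nlinarith [abs_nonneg (t - t')])
        have h2 : ‖iteratedDeriv r.1 G t'‖ ≤ M := hM r.1 (by omega) t' ht'mem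
        have h3 : |s r| ≤ R := le_trans (hs r) (hT r).2
        have h4 : (0:ℝ) ≤ |s r| := abs_nonneg _
        have h5 := hsjs r
        have h6 : (0:ℝ) ≤ |s r - (j r : ℝ) * δs| := abs_nonneg _
        nlinarith [norm_nonneg (iteratedDeriv r.1 G t - iteratedDeriv r.1 G t'),
          norm_nonneg (iteratedDeriv r.1 G t')]
      have hsum : ‖y - Φ (i, j)‖ ≤ (n-1 : ℕ) * (R * (M * δt) + δs * M) := by
        rw [hy, hΦ, ← Finset.sum_sub_distrib]
        refine le_trans (norm_sum_le _ _) ?_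
        calc ∑ r : Fin (n-1), ‖s r • iteratedDeriv r.1 G t
              - ((j r : ℝ) * δs) • iteratedDeriv r.1 G (-2 + (i:ℝ) * δt)‖
            ≤ ∑ _r : Fin (n-1), (R * (M * δt) + δs * M) := by
              refine Finset.sum_le_sum fun r _ => ?_
              exact hterm r
          _ = (n-1 : ℕ) * (R * (M * δt) + δs * M) := by
              rw [Finset.sum_const, Finset.card_univ, Fintype.card_fin, nsmul_eq_mul]
      refine le_trans hsum ?_
      have hnn : ((n-1 : ℕ) : ℝ) ≤ (n:ℝ) := by
        have : (n-1 : ℕ) ≤ n := by omega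
        exact_mod_cast this
      have e1 : R * (M * δt) = σ / (M * n) := by
        rw [hδt]; field_simp
      have e2 : δs * M = σ / n := by
        rw [hδs]; field_simp
      rw [e1, e2]
      have hMn1 : (1:ℝ) ≤ M * n := by nlinarith
      have h7 : σ / (M*n) ≤ σ / n := by gcongr; nlinarith
      have h8 : ((n-1:ℕ):ℝ) * (σ/(M*n) + σ/n) ≤ (n:ℝ) * (2 * (σ/n)) := by
        have : σ/(M*n) + σ/n ≤ 2 * (σ/n) := by linarith
        have h9 : (0:ℝ) ≤ σ/(M*n) + σ/n := by positivity
        nlinarith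
      have h10 : (n:ℝ) * (2 * (σ/n)) = 2 * σ := by field_simp
      linarith
    refine Set.mem_biUnion hmem ?_
    rw [Metric.mem_ball]
    have hd : dist y (Φ (i, j)) ≤ 2*σ := by rw [dist_eq_norm]; exact hyΦ
    calc dist x (Φ (i, j)) ≤ dist x y + dist y (Φ (i, j)) := dist_triangle _ _ _
      _ < σ + 2*σ := by linarith
      _ = 3*σ := by ring
  -- cardinality computation
  have hIcc : ∀ r : Fin (n-1), (Finset.Icc (-(J r:ℤ)) (J r)).card = 2*(J r)+1 := by
    intro r; rw [Int.card_Icc]; omega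
  have hScard : S.card = (K+1) * ∏ r : Fin (n-1), (2*(J r)+1) := by
    rw [hS, Finset.card_product, Finset.card_range, Fintype.card_piFinset]
    congr 1
    exact Finset.prod_congr rfl fun r _ => hIcc r
  have hcard : (S.card : ℝ) = ((K+1 : ℕ) : ℝ) * ∏ r : Fin (n-1), ((2*(J r)+1 : ℕ) : ℝ) := by
    rw [hScard]
    push_cast
    ring
  -- real bound on the cardinality
  have hKb : ((K+1 : ℕ) : ℝ) ≤ (4*M^2*n/σ + 2) * R := by
    have h2 : 4/δt = (4*M^2*(n:ℝ)/σ) * R := by rw [hδt]; field_simp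
    have h1 : (K:ℝ) ≤ (4*M^2*(n:ℝ)/σ) * R :=
      h2 ▸ Nat.floor_le (div_nonneg (by norm_num) hδt0.le)
    push_cast
    linarith
  have hJb : ∀ r : Fin (n-1), ((2*(J r)+1 : ℕ) : ℝ) ≤ (2*M*n/σ + 3) * T r := by
    intro r
    have h2 : T r / δs = (M*(n:ℝ)/σ) * T r := by rw [hδs]; field_simp
    have h1 : ((⌊T r/δs⌋₊ : ℕ) : ℝ) ≤ (M*(n:ℝ)/σ) * T r :=
      le_trans (Nat.floor_le (div_nonneg (by linarith [hT1 r]) hδs0.le)) (le_of_eq h2)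
    have h3 : (1:ℝ) ≤ T r := hT1 r
    have h4 : (2*M*(n:ℝ)/σ + 3) * T r = 2*(M*(n:ℝ)/σ*T r) + 3*T r := by ring
    simp only [hJ]
    push_cast
    rw [h4]
    linarith
  have hprodT : (0:ℝ) ≤ ∏ r : Fin (n-1), T r :=
    Finset.prod_nonneg fun r _ => by linarith [hT1 r]
  have hprodb : (∏ r : Fin (n-1), ((2*(J r)+1 : ℕ) : ℝ))
      ≤ (2*M*n/σ + 3)^(n-1) * ∏ r : Fin (n-1), T r := by
    calc ∏ r : Fin (n-1), ((2*(J r)+1 : ℕ) : ℝ)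
        ≤ ∏ r : Fin (n-1), ((2*M*n/σ + 3) * T r) :=
          Finset.prod_le_prod (fun r _ => Nat.cast_nonneg _) (fun r _ => hJb r)
      _ = (2*M*n/σ + 3)^(n-1) * ∏ r : Fin (n-1), T r := by
          rw [Finset.prod_mul_distrib, Finset.prod_const, Finset.card_univ, Fintype.card_fin]
  have hreal : (S.card : ℝ) * v
      ≤ (4*M^2*n/σ + 2) * (2*M*n/σ + 3)^(n-1) * (v+1) * R * ∏ r : Fin (n-1), T r := by
    rw [hcard]
    have hA : ((K+1:ℕ):ℝ) * ∏ r : Fin (n-1), ((2*(J r)+1 : ℕ) : ℝ)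
        ≤ ((4*M^2*n/σ + 2) * R) * ((2*M*n/σ + 3)^(n-1) * ∏ r : Fin (n-1), T r) := by
      refine mul_le_mul hKb hprodb (Finset.prod_nonneg fun r _ => by positivity) ?_
      positivity
    have hvv : v ≤ v + 1 := by linarith
    calc ((K+1:ℕ):ℝ) * (∏ r : Fin (n-1), ((2*(J r)+1 : ℕ) : ℝ)) * v
        ≤ (((4*M^2*n/σ + 2) * R) * ((2*M*n/σ + 3)^(n-1) * ∏ r : Fin (n-1), T r)) * (v+1) := by
          refine mul_le_mul hA hvv hv0 ?_
          positivity
      _ = (4*M^2*n/σ + 2) * (2*M*n/σ + 3)^(n-1) * (v+1) * R * ∏ r : Fin (n-1), T r := by ring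
  -- conclude
  calc volume (Metric.thickening σ (Fset n G T))
      ≤ volume (⋃ p ∈ S, Metric.ball (Φ p) (3*σ)) := measure_mono hcover
    _ ≤ ∑ p ∈ S, volume (Metric.ball (Φ p) (3*σ)) := measure_biUnion_finset_le _ _
    _ = S.card * volume (Metric.ball (0 : EuclideanSpace ℝ (Fin n)) (3*σ)) := by
        simp only [Measure.addHaar_ball_center, Finset.sum_const, nsmul_eq_mul]
    _ = ENNReal.ofReal ((S.card : ℝ) * v) := by
        rw [ENNReal.ofReal_mul (by positivity), ENNReal.ofReal_natCast,
          ENNReal.ofReal_toReal hVne]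
    _ ≤ ENNReal.ofReal ((4*M^2*n/σ + 2) * (2*M*n/σ + 3)^(n-1) * (v+1) * R
          * ∏ r : Fin (n-1), T r) := ENNReal.ofReal_le_ofReal hreal
end

section
/- Let I be a compact interval, let 2 ≤ ℓ be an integer, and let β₁, …, β_ℓ : I → ℝ be continuously differentiable functions satisfying β_m' = β_{m+1} on I for all 1 ≤ m ≤ ℓ−1. Suppose β_ℓ has no zero on I. Then for each integer 1 ≤ r ≤ ℓ−1 there exists a finite collection 𝓘_r of at most 2^{ℓ−r−1} closed subintervals of I whose union is I and whose interiors are pairwise disjoint, such that for every J ∈ 𝓘_r and every r ≤ m ≤ ℓ−1, the function β_m is strictly monotone on J. -/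
open Set

/-- If the derivative has constant strict sign on the open subinterval, the function is
strictly monotone or strictly antitone on the closed subinterval. -/
lemma strict_of_sign (g f : ℝ → ℝ) (a b c d : ℝ)
    (hsub : Set.Icc c d ⊆ Set.Icc a b)
    (hg : ContinuousOn g (Set.Icc a b))
    (hd : ∀ t ∈ Set.Icc a b, HasDerivWithinAt g (f t) (Set.Icc a b) t)
    (hsign : (∀ t ∈ Set.Ioo c d, 0 < f t) ∨ (∀ t ∈ Set.Ioo c d, f t < 0)) :
    StrictMonoOn g (Set.Icc c d) ∨ StrictAntiOn g (Set.Icc c d) := by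
  have hderiv : ∀ x ∈ Set.Ioo c d, deriv g x = f x := by
    intro x hx
    have hnb : Set.Icc a b ∈ nhds x :=
      Filter.mem_of_superset (isOpen_Ioo.mem_nhds hx) (Set.Ioo_subset_Icc_self.trans hsub)
    exact ((hd x (hsub (Set.Ioo_subset_Icc_self hx))).hasDerivAt hnb).deriv
  rcases hsign with h | h
  · left
    apply strictMonoOn_of_deriv_pos (convex_Icc c d) (hg.mono hsub)
    intro x hx
    rw [interior_Icc] at hx
    rw [hderiv x hx]; exact h x hx
  · right
    apply strictAntiOn_of_deriv_neg (convex_Icc c d) (hg.mono hsub)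
    intro x hx
    rw [interior_Icc] at hx
    rw [hderiv x hx]; exact h x hx

lemma sign_split_mono (f : ℝ → ℝ) (c d : ℝ) (hcd : c ≤ d)
    (hf : ContinuousOn f (Set.Icc c d)) (hm : StrictMonoOn f (Set.Icc c d)) :
    ∃ e ∈ Set.Icc c d,
      ((∀ t ∈ Set.Ioo c e, 0 < f t) ∨ (∀ t ∈ Set.Ioo c e, f t < 0)) ∧
      ((∀ t ∈ Set.Ioo e d, 0 < f t) ∨ (∀ t ∈ Set.Ioo e d, f t < 0)) := by
  rcases le_or_gt 0 (f c) with h0 | h0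
  · refine ⟨c, Set.left_mem_Icc.2 hcd, Or.inl (fun t ht => absurd ht (by simp)), Or.inl ?_⟩
    intro t ht
    have := hm (Set.left_mem_Icc.2 hcd) ⟨ht.1.le, ht.2.le⟩ ht.1
    linarith
  rcases le_or_gt (f d) 0 with h1 | h1
  · refine ⟨d, Set.right_mem_Icc.2 hcd, Or.inr ?_, Or.inr (fun t ht => absurd ht (by simp))⟩
    intro t ht
    have := hm ⟨ht.1.le, ht.2.le⟩ (Set.right_mem_Icc.2 hcd) ht.2
    linarith
  · obtain ⟨e, heI, hfe⟩ := intermediate_value_Icc hcd hf ⟨h0.le, h1.le⟩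
    refine ⟨e, heI, Or.inr ?_, Or.inl ?_⟩
    · intro t ht
      have := hm ⟨ht.1.le, ht.2.le.trans heI.2⟩ heI ht.2
      linarith [this, hfe.le]
    · intro t ht
      have := hm heI ⟨heI.1.trans ht.1.le, ht.2.le⟩ ht.1
      linarith [this, hfe.ge]

lemma sign_split (f : ℝ → ℝ) (c d : ℝ) (hcd : c ≤ d)
    (hf : ContinuousOn f (Set.Icc c d))
    (hm : StrictMonoOn f (Set.Icc c d) ∨ StrictAntiOn f (Set.Icc c d)) :
    ∃ e ∈ Set.Icc c d,
      ((∀ t ∈ Set.Ioo c e, 0 < f t) ∨ (∀ t ∈ Set.Ioo c e, f t < 0)) ∧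
      ((∀ t ∈ Set.Ioo e d, 0 < f t) ∨ (∀ t ∈ Set.Ioo e d, f t < 0)) := by
  rcases hm with hm | hm
  · exact sign_split_mono f c d hcd hf hm
  · have hm' : StrictMonoOn (fun t => -f t) (Set.Icc c d) := fun x hx y hy hxy =>
      neg_lt_neg (hm hx hy hxy)
    obtain ⟨e, heI, h1, h2⟩ := sign_split_mono (fun t => -f t) c d hcd hf.neg hm'
    have flip : ∀ s : Set ℝ, ((∀ t ∈ s, 0 < -f t) ∨ (∀ t ∈ s, -f t < 0)) →
        ((∀ t ∈ s, 0 < f t) ∨ (∀ t ∈ s, f t < 0)) := by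
      rintro s (h | h)
      · exact Or.inr fun t ht => by linarith [h t ht]
      · exact Or.inl fun t ht => by linarith [h t ht]
    exact ⟨e, heI, flip _ h1, flip _ h2⟩

lemma sign_const (f : ℝ → ℝ) (a b : ℝ) (hab : a ≤ b) (hf : ContinuousOn f (Set.Icc a b))
    (hz : ∀ t ∈ Set.Icc a b, f t ≠ 0) :
    (∀ t ∈ Set.Icc a b, 0 < f t) ∨ (∀ t ∈ Set.Icc a b, f t < 0) := by
  by_contra h
  push_neg at h
  obtain ⟨⟨s, hs, hfs⟩, ⟨t, ht, hft⟩⟩ := h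
  have hfs' : f s < 0 := lt_of_le_of_ne hfs (hz s hs)
  have hft' : 0 < f t := lt_of_le_of_ne hft (Ne.symm (hz t ht))
  have hsub : Set.uIcc s t ⊆ Set.Icc a b := by
    rw [← Set.uIcc_of_le hab]
    exact Set.uIcc_subset_uIcc (by rwa [Set.uIcc_of_le hab]) (by rwa [Set.uIcc_of_le hab])
  have := intermediate_value_uIcc (hf.mono hsub)
  have h0 : (0 : ℝ) ∈ Set.uIcc (f s) (f t) := by
    rw [Set.mem_uIcc]; exact Or.inl ⟨hfs'.le, hft'.le⟩
  obtain ⟨u, hu, hu0⟩ := this h0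
  exact hz u (hsub hu) hu0

/-- Monotonicity partition: if `β_m' = β_{m+1}` and `β_ℓ` has no zero on `I = [a,b]`, then for
each `1 ≤ r ≤ ℓ−1` the interval `I` can be partitioned into at most `2^{ℓ−r−1}` closed
subintervals (with pairwise disjoint interiors) on each of which `β_r, …, β_{ℓ-1}` are all
strictly monotone. -/
theorem monotonicity_partition
    (a b : ℝ) (hab : a ≤ b) (ℓ : ℕ) (hℓ : 2 ≤ ℓ) (β : ℕ → ℝ → ℝ)
    (hcont : ∀ m, 1 ≤ m → m ≤ ℓ → ContinuousOn (β m) (Set.Icc a b))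
    (hderiv : ∀ m, 1 ≤ m → m ≤ ℓ - 1 → ∀ t ∈ Set.Icc a b,
      HasDerivWithinAt (β m) (β (m + 1) t) (Set.Icc a b) t)
    (hzero : ∀ t ∈ Set.Icc a b, β ℓ t ≠ 0) :
    ∀ r : ℕ, 1 ≤ r → r ≤ ℓ - 1 →
      ∃ 𝓘 : Finset (ℝ × ℝ),
        𝓘.card ≤ 2 ^ (ℓ - r - 1) ∧
        (∀ p ∈ 𝓘, p.1 ≤ p.2 ∧ Set.Icc p.1 p.2 ⊆ Set.Icc a b) ∧
        (⋃ p ∈ 𝓘, Set.Icc p.1 p.2) = Set.Icc a b ∧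
        ((𝓘 : Set (ℝ × ℝ)).Pairwise fun p p' =>
          interior (Set.Icc p.1 p.2) ∩ interior (Set.Icc p'.1 p'.2) = ∅) ∧
        ∀ p ∈ 𝓘, ∀ m, r ≤ m → m ≤ ℓ - 1 →
          StrictMonoOn (β m) (Set.Icc p.1 p.2) ∨ StrictAntiOn (β m) (Set.Icc p.1 p.2) := by
  intro r hr1 hr2
  obtain ⟨n, hn⟩ : ∃ n, ℓ - 1 - r = n := ⟨_, rfl⟩
  induction n generalizing r with
  | zero =>
    have hrℓ : r = ℓ - 1 := by omega
    subst hrℓ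
    refine ⟨{(a, b)}, ?_, ?_, ?_, ?_, ?_⟩
    · simpa using Nat.one_le_two_pow
    · intro p hp
      rw [Finset.mem_singleton] at hp
      subst hp
      exact ⟨hab, subset_rfl⟩
    · simp
    · exact Set.Subsingleton.pairwise (by simp) _
    · intro p hp m hm1 hm2
      have hm : m = ℓ - 1 := le_antisymm hm2 hm1
      subst hm
      rw [Finset.mem_singleton] at hp
      subst hp
      have hs := sign_const (β ℓ) a b hab (hcont ℓ (by omega) le_rfl) hzero
      apply strict_of_sign (β (ℓ - 1)) (β ℓ) a b a b subset_rfl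
        (hcont (ℓ - 1) (by omega) (by omega))
      · intro t ht
        have := hderiv (ℓ - 1) (by omega) le_rfl t ht
        rwa [show ℓ - 1 + 1 = ℓ by omega] at this
      · rcases hs with h | h
        · exact Or.inl fun t ht => h t (Set.Ioo_subset_Icc_self ht)
        · exact Or.inr fun t ht => h t (Set.Ioo_subset_Icc_self ht)
  | succ n ih =>
    have hr2' : r + 1 ≤ ℓ - 1 := by omega
    obtain ⟨𝓘', hcard', hbound', hunion', hpair', hmono'⟩ :=
      ih (r + 1) (by omega) hr2' (by omega)
    have key : ∀ p : ℝ × ℝ, ∃ e, p ∈ 𝓘' →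
        e ∈ Set.Icc p.1 p.2 ∧
        ((∀ t ∈ Set.Ioo p.1 e, 0 < β (r + 1) t) ∨ (∀ t ∈ Set.Ioo p.1 e, β (r + 1) t < 0)) ∧
        ((∀ t ∈ Set.Ioo e p.2, 0 < β (r + 1) t) ∨ (∀ t ∈ Set.Ioo e p.2, β (r + 1) t < 0)) := by
      intro p
      by_cases hp : p ∈ 𝓘'
      · obtain ⟨hle, hsub⟩ := hbound' p hp
        obtain ⟨e, heI, h1, h2⟩ := sign_split (β (r + 1)) p.1 p.2 hle
          ((hcont (r + 1) (by omega) (by omega)).mono hsub)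
          (hmono' p hp (r + 1) le_rfl hr2')
        exact ⟨e, fun _ => ⟨heI, h1, h2⟩⟩
      · exact ⟨0, fun h => absurd h hp⟩
    choose e he using key
    set 𝓘 : Finset (ℝ × ℝ) := 𝓘'.biUnion fun p => {(p.1, e p), (e p, p.2)} with h𝓘
    have hmem : ∀ q ∈ 𝓘, ∃ p ∈ 𝓘', q = (p.1, e p) ∨ q = (e p, p.2) := by
      intro q hq
      rw [h𝓘] at hq
      simpa only [Finset.mem_biUnion, Finset.mem_insert, Finset.mem_singleton] using hq
    have hqsub : ∀ q ∈ 𝓘, ∀ p ∈ 𝓘', q = (p.1, e p) ∨ q = (e p, p.2) →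
        Set.Icc q.1 q.2 ⊆ Set.Icc p.1 p.2 := by
      intro q hq p hp hqe
      obtain ⟨he1, he2⟩ := (he p hp).1
      rcases hqe with rfl | rfl
      · exact Set.Icc_subset_Icc le_rfl he2
      · exact Set.Icc_subset_Icc he1 le_rfl
    refine ⟨𝓘, ?_, ?_, ?_, ?_, ?_⟩
    · calc 𝓘.card ≤ ∑ p ∈ 𝓘', (({(p.1, e p), (e p, p.2)} : Finset (ℝ × ℝ)).card) :=
            Finset.card_biUnion_le
        _ ≤ ∑ _p ∈ 𝓘', 2 := Finset.sum_le_sum fun p _ =>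
            (Finset.card_insert_le _ _).trans (by simp)
        _ = 2 * 𝓘'.card := by rw [Finset.sum_const, smul_eq_mul, mul_comm]
        _ ≤ 2 * 2 ^ (ℓ - (r + 1) - 1) := Nat.mul_le_mul_left 2 hcard'
        _ ≤ 2 ^ (ℓ - r - 1) := by
            have h : ℓ - r - 1 = (ℓ - (r + 1) - 1) + 1 := by omega
            rw [h, pow_succ, mul_comm]
    · intro q hq
      obtain ⟨p, hp, hqe⟩ := hmem q hq
      obtain ⟨he1, he2⟩ := (he p hp).1
      have hsub := (hbound' p hp).2
      refine ⟨?_, (hqsub q hq p hp hqe).trans hsub⟩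
      rcases hqe with rfl | rfl
      · exact he1
      · exact he2
    · apply subset_antisymm
      · apply Set.iUnion₂_subset
        intro q hq
        obtain ⟨p, hp, hqe⟩ := hmem q hq
        exact (hqsub q hq p hp hqe).trans (hbound' p hp).2
      · rw [← hunion']
        apply Set.iUnion₂_subset
        intro p hp
        obtain ⟨he1, he2⟩ := (he p hp).1
        rw [← Set.Icc_union_Icc_eq_Icc he1 he2]
        apply Set.union_subset
        · apply Set.subset_iUnion₂_of_subset (p.1, e p)
          · exact subset_rfl
          · rw [h𝓘]
            simp only [Finset.mem_biUnion, Finset.mem_insert, Finset.mem_singleton]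
            exact ⟨p, hp, Or.inl rfl⟩
        · apply Set.subset_iUnion₂_of_subset (e p, p.2)
          · exact subset_rfl
          · rw [h𝓘]
            simp only [Finset.mem_biUnion, Finset.mem_insert, Finset.mem_singleton]
            exact ⟨p, hp, Or.inr rfl⟩
    · intro q hq q' hq' hne
      rw [Finset.mem_coe] at hq hq'
      obtain ⟨p, hp, hqe⟩ := hmem q hq
      obtain ⟨p', hp', hqe'⟩ := hmem q' hq'
      by_cases hpp : p = p'
      · subst hpp
        have hdisj : Set.Ioo p.1 (e p) ∩ Set.Ioo (e p) p.2 = ∅ := by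
          apply Set.eq_empty_iff_forall_notMem.2
          rintro x ⟨⟨_, h1⟩, ⟨h2, _⟩⟩
          exact absurd (h1.trans h2) (lt_irrefl x)
        rcases hqe with rfl | rfl <;> rcases hqe' with rfl | rfl
        · exact absurd rfl hne
        · simpa only [interior_Icc] using hdisj
        · rw [Set.inter_comm]; simpa only [interior_Icc] using hdisj
        · exact absurd rfl hne
      · have h1 : interior (Set.Icc q.1 q.2) ⊆ interior (Set.Icc p.1 p.2) :=
          interior_mono (hqsub q hq p hp hqe)
        have h2 : interior (Set.Icc q'.1 q'.2) ⊆ interior (Set.Icc p'.1 p'.2) :=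
          interior_mono (hqsub q' hq' p' hp' hqe')
        have := hpair' (Finset.mem_coe.2 hp) (Finset.mem_coe.2 hp') hpp
        exact Set.subset_empty_iff.1 (this ▸ Set.inter_subset_inter h1 h2)
    · intro q hq m hm1 hm2
      obtain ⟨p, hp, hqe⟩ := hmem q hq
      obtain ⟨heI, hs1, hs2⟩ := he p hp
      have hsubq : Set.Icc q.1 q.2 ⊆ Set.Icc p.1 p.2 := hqsub q hq p hp hqe
      rcases eq_or_lt_of_le hm1 with rfl | hm
      · apply strict_of_sign (β r) (β (r + 1)) a b q.1 q.2 (hsubq.trans (hbound' p hp).2)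
          (hcont r (by omega) (by omega)) (hderiv r hr1 hr2)
        rcases hqe with rfl | rfl
        · exact hs1
        · exact hs2
      · rcases hmono' p hp m hm hm2 with h | h
        · exact Or.inl (h.mono hsubq)
        · exact Or.inr (h.mono hsubq)
end

section
/- Let n ≥ 3 be an integer, set κ(d) := 1/((n−d+1)(d+1) − 1) for 1 ≤ d ≤ n, define 𝓔(q, δ) := max_{1 ≤ d ≤ n} (q^{−κ(d)} δ^{-1})^{d+1 − 1/(n−d+1)}, and set β(n) := 4/(n(n+4)) if n is even and β(n) := 4/(n(n+4)−1) if n is odd. Then for every ε > 0 there exists a constant C > 0 (depending only on n and ε) such that for every real q ≥ 1 and every δ ∈ (0, 1/4) with δ ≥ q^{−β(n)+(n+1)ε}: q^{nε} 𝓔(q, δ) ≤ C q^{−ε}. -/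
open Real
set_option maxHeartbeats 800000

/-- `κ(d) = 1/((n−d+1)(d+1) − 1)`. -/
noncomputable def kap (n d : ℕ) : ℝ := (((n - d + 1) * (d + 1) - 1 : ℕ) : ℝ)⁻¹

/-- The error factor `𝓔(q, δ) = max_{1 ≤ d ≤ n} (q^{−κ(d)} δ⁻¹)^{d+1−1/(n−d+1)}`. -/
noncomputable def Err (n : ℕ) (q δ : ℝ) : ℝ :=
  ⨆ d : Fin n, (q ^ (-(kap n (d.1 + 1))) * δ⁻¹) ^
    (((d.1 : ℝ) + 1) + 1 - ((n : ℝ) - ((d.1 : ℝ) + 1) + 1)⁻¹)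

/-- `β(n)`: `4/(n(n+4))` for even `n`, `4/(n(n+4)−1)` for odd `n`. -/
noncomputable def betaExp (n : ℕ) : ℝ :=
  if Even n then 4 / ((n : ℝ) * ((n : ℝ) + 4)) else 4 / ((n : ℝ) * ((n : ℝ) + 4) - 1)

lemma int_amgm (a b s : ℤ) (h : a + b = s) : 4 * (a * b) ≤ s ^ 2 := by
  subst h; nlinarith [sq_nonneg (a - b)]

lemma int_amgm_odd (a b s : ℤ) (h : a + b = s) (hs : Odd s) :
    4 * (a * b) + 1 ≤ s ^ 2 := by
  subst h
  have hab : a - b ≠ 0 := by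
    intro h0
    rcases hs with ⟨k, hk⟩
    omega
  have h1 : 1 ≤ |a - b| := Int.one_le_abs hab
  nlinarith [sq_abs (a - b), abs_nonneg (a - b)]

/-- In the range `δ ≥ q^{−β(n)+(n+1)ε}`, the error term satisfies `q^{nε} 𝓔(q,δ) = O(q^{−ε})`. -/
theorem error_term_small_in_good_range
    {n : ℕ} (hn : 3 ≤ n) (ε : ℝ) (hε : 0 < ε) :
    ∃ C > 0, ∀ q δ : ℝ, 1 ≤ q → δ ∈ Set.Ioo (0 : ℝ) (1/4) →
      q ^ (-(betaExp n) + (n + 1) * ε) ≤ δ →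
      q ^ ((n : ℝ) * ε) * Err n q δ ≤ C * q ^ (-ε) := by
  refine ⟨1, one_pos, ?_⟩
  intro q δ hq hδ hlow
  have hq0 : (0 : ℝ) < q := lt_of_lt_of_le one_pos hq
  have hδ0 : 0 < δ := hδ.1
  haveI hne : Nonempty (Fin n) := ⟨⟨0, by omega⟩⟩
  have hc : (0 : ℝ) < ((n : ℝ) + 1) * ε := by positivity
  -- δ⁻¹ ≤ q ^ (β - (n+1)ε)
  have hδinv : δ⁻¹ ≤ q ^ (betaExp n - ((n : ℝ) + 1) * ε) := by
    have h1 : q ^ (betaExp n - ((n : ℝ) + 1) * ε)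
        = (q ^ (-(betaExp n) + ((n : ℝ) + 1) * ε))⁻¹ := by
      rw [← Real.rpow_neg hq0.le]
      congr 1; ring
    rw [h1]
    exact inv_anti₀ (Real.rpow_pos_of_pos hq0 _) hlow
  have hErr : Err n q δ ≤ q ^ (-(((n : ℝ) + 1) * ε)) := by
    apply ciSup_le
    intro d
    have hdn : d.1 + 1 ≤ n := d.2
    set m : ℕ := n - (d.1 + 1) + 1 with hmdef
    set K : ℕ := m * ((d.1 + 1) + 1) - 1 with hKdef
    have hkap : kap n (d.1 + 1) = (K : ℝ)⁻¹ := rfl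
    have hm1 : 1 ≤ m := Nat.le_add_left 1 _
    have hP : 2 ≤ m * ((d.1 + 1) + 1) := by
      calc 2 = 1 * 2 := by norm_num
      _ ≤ m * ((d.1 + 1) + 1) := Nat.mul_le_mul hm1 (by omega)
    have hK1 : 1 ≤ K := by omega
    have hK0 : (0 : ℝ) < (K : ℝ) := by exact_mod_cast hK1
    have hmcast : ((n : ℝ) - ((d.1 : ℝ) + 1) + 1) = (m : ℝ) := by
      rw [hmdef, Nat.cast_add, Nat.cast_sub hdn]
      push_cast
      ring
    -- the exponent
    set e : ℝ := ((d.1 : ℝ) + 1) + 1 - ((n : ℝ) - ((d.1 : ℝ) + 1) + 1)⁻¹ with hedef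
    clear_value e
    have hm1R : (1 : ℝ) ≤ (m : ℝ) := by exact_mod_cast hm1
    have he1 : 1 ≤ e := by
      rw [hedef, hmcast]
      have h2 : (m : ℝ)⁻¹ ≤ 1 := by
        rw [inv_le_one_iff₀]; right; exact hm1R
      have hd0 : (0 : ℝ) ≤ (d.1 : ℝ) := Nat.cast_nonneg _
      linarith
    have he0 : (0 : ℝ) ≤ e := by linarith
    -- β ≤ K⁻¹
    have hsum : (m : ℤ) + ((d.1 : ℤ) + 1 + 1) = (n : ℤ) + 2 := by omega
    have h2 : 1 ≤ m * ((d.1 + 1) + 1) := by omega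
    have hKint : (K : ℤ) = (m : ℤ) * ((d.1 : ℤ) + 1 + 1) - 1 := by
      rw [hKdef, Nat.cast_sub h2]
      push_cast
      ring
    have hβ : betaExp n ≤ (K : ℝ)⁻¹ := by
      have hn3 : (3 : ℝ) ≤ (n : ℝ) := by exact_mod_cast hn
      unfold betaExp
      by_cases hev : Even n
      · simp only [hev, if_true]
        have hZ : 4 * (K : ℤ) ≤ (n : ℤ) * ((n : ℤ) + 4) := by
          have := int_amgm (m : ℤ) ((d.1 : ℤ) + 1 + 1) ((n : ℤ) + 2) hsum
          nlinarith
        have hR : 4 * (K : ℝ) ≤ (n : ℝ) * ((n : ℝ) + 4) := by exact_mod_cast hZ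
        have hX : (0 : ℝ) < (n : ℝ) * ((n : ℝ) + 4) := by nlinarith
        rw [inv_eq_one_div, div_le_div_iff₀ hX hK0]
        linarith
      · simp only [hev, if_false]
        have hoddn : Odd n := Nat.not_even_iff_odd.mp hev
        have hodd : Odd ((n : ℤ) + 2) := by
          rcases hoddn with ⟨k, hk⟩
          exact ⟨(k : ℤ) + 1, by omega⟩
        have hZ : 4 * (K : ℤ) ≤ (n : ℤ) * ((n : ℤ) + 4) - 1 := by
          have := int_amgm_odd (m : ℤ) ((d.1 : ℤ) + 1 + 1) ((n : ℤ) + 2) hsum hodd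
          nlinarith
        have hR : 4 * (K : ℝ) ≤ (n : ℝ) * ((n : ℝ) + 4) - 1 := by exact_mod_cast hZ
        have hX : (0 : ℝ) < (n : ℝ) * ((n : ℝ) + 4) - 1 := by nlinarith
        rw [inv_eq_one_div, div_le_div_iff₀ hX hK0]
        linarith
    -- bound the term
    rw [hkap]
    have hbase : q ^ (-(K : ℝ)⁻¹) * δ⁻¹
        ≤ q ^ ((-(K : ℝ)⁻¹) + (betaExp n - ((n : ℝ) + 1) * ε)) := by
      rw [Real.rpow_add hq0]
      exact mul_le_mul_of_nonneg_left hδinv (Real.rpow_nonneg hq0.le _)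
    have hbase0 : (0 : ℝ) ≤ q ^ (-(K : ℝ)⁻¹) * δ⁻¹ := by positivity
    calc (q ^ (-(K : ℝ)⁻¹) * δ⁻¹) ^ e
        ≤ (q ^ ((-(K : ℝ)⁻¹) + (betaExp n - ((n : ℝ) + 1) * ε))) ^ e :=
          Real.rpow_le_rpow hbase0 hbase he0
      _ = q ^ (((-(K : ℝ)⁻¹) + (betaExp n - ((n : ℝ) + 1) * ε)) * e) :=
          (Real.rpow_mul hq0.le _ _).symm
      _ ≤ q ^ (-(((n : ℝ) + 1) * ε)) := by
          apply Real.rpow_le_rpow_of_exponent_le hq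
          have h3 : ((-(K : ℝ)⁻¹) + betaExp n) * e ≤ 0 := by
            have h4 : (-(K : ℝ)⁻¹) + betaExp n ≤ 0 := by
              have : (0 : ℝ) < (K : ℝ)⁻¹ := by positivity
              linarith
            exact mul_nonpos_of_nonpos_of_nonneg h4 he0
          have h5 : ((n : ℝ) + 1) * ε ≤ (((n : ℝ) + 1) * ε) * e :=
            le_mul_of_one_le_right hc.le he1
          have h6 : ((-(K : ℝ)⁻¹) + (betaExp n - ((n : ℝ) + 1) * ε)) * e
              = ((-(K : ℝ)⁻¹) + betaExp n) * e - (((n : ℝ) + 1) * ε) * e := by ring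
          linarith
  have hfin : q ^ ((n : ℝ) * ε) * Err n q δ ≤ q ^ ((n : ℝ) * ε) * q ^ (-(((n : ℝ) + 1) * ε)) :=
    mul_le_mul_of_nonneg_left hErr (Real.rpow_nonneg hq0.le _)
  calc q ^ ((n : ℝ) * ε) * Err n q δ
      ≤ q ^ ((n : ℝ) * ε) * q ^ (-(((n : ℝ) + 1) * ε)) := hfin
    _ = q ^ ((n : ℝ) * ε + -(((n : ℝ) + 1) * ε)) := (Real.rpow_add hq0 _ _).symm
    _ = q ^ (-ε) := by congr 1; ring
    _ = 1 * q ^ (-ε) := (one_mul _).symm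
end
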